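/- arXiv:2011.09076 — 9 statements merged into one kernel-verified Lean document; each statement's English description precedes it below -/
import Mathlib

section
/- Let $C^0, C^1, C^2, \ldots$ be the cache configurations of Belady's Farthest-in-Future algorithm run with cache sizes $0, 1, 2, \ldots$ on the same request sequence, starting from nested initial configurations $C^m_0 \subset C^{m+1}_0$ for all $m$. Then for every time $t$ and every $m \geq 1$, the configurations remain nested: $C^{m-1}_t \subset C^m_t$. -/
/-- Time of the next request to page `p` strictly after time `t` (`⊤` if never requested again). -/
noncomputable def nextReq (r : ℕ → ℕ) (t p : ℕ) : ℕ∞ :=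
  sInf ((fun s : ℕ => (s : ℕ∞)) '' {s : ℕ | t < s ∧ r s = p})

/-- Tie-breaking key: pages compared by next-request time, ties broken by page id. -/
noncomputable def fifKey (r : ℕ → ℕ) (t p : ℕ) : ℕ∞ ×ₗ ℕ :=
  toLex ((nextReq r t p, p) : ℕ∞ × ℕ)

/-- The page evicted by Farthest-in-Future from cache `C` at time `t`:
the page of `C` whose next request after time `t` is farthest in the future
(ties broken by the fixed rule). -/
noncomputable def victim (r : ℕ → ℕ) (t : ℕ) (C : Finset ℕ) : ℕ :=
  if h : C.Nonempty then
    Classical.choose (C.exists_max_image (fifKey r t) h)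
  else 0

/-- One step of Belady's FiF algorithm: serve the request `r (t+1)` from cache `C`. -/
noncomputable def fifStep (r : ℕ → ℕ) (t : ℕ) (C : Finset ℕ) : Finset ℕ :=
  if r (t+1) ∈ C then C
  else if C = ∅ then C
  else insert (r (t+1)) (C.erase (victim r (t+1) C))

/-- The cache of FiF at time `t`, starting from initial configuration `C0` and
serving requests `r 1, r 2, …`. -/
noncomputable def fifCache (r : ℕ → ℕ) (C0 : Finset ℕ) : ℕ → Finset ℕ
  | 0 => C0
  | t+1 => fifStep r t (fifCache r C0 t)

/-- The position of page `p` in the Belady ranking at time `t`: the least cache size `m`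
such that `p` is in the cache of `FiF^m` at time `t`. -/
noncomputable def beladyPos (r : ℕ → ℕ) (C0 : ℕ → Finset ℕ) (t p : ℕ) : ℕ :=
  sInf {m | p ∈ fifCache r (C0 m) t}

lemma victim_spec (r : ℕ → ℕ) (t : ℕ) (C : Finset ℕ) (h : C.Nonempty) :
    victim r t C ∈ C ∧ ∀ x ∈ C, fifKey r t x ≤ fifKey r t (victim r t C) := by
  unfold victim
  rw [dif_pos h]
  exact Classical.choose_spec (C.exists_max_image (fifKey r t) h)

lemma fifKey_inj (r : ℕ → ℕ) (t : ℕ) : Function.Injective (fifKey r t) := by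
  intro p q h
  unfold fifKey at h
  have := congrArg (fun x => (ofLex x).2) h
  simpa using this

lemma fifStep_subset (r : ℕ → ℕ) (t : ℕ) {D C : Finset ℕ} (h : D ⊆ C)
    (hC : C.Nonempty) : fifStep r t D ⊆ fifStep r t C := by
  unfold fifStep
  by_cases hpD : r (t+1) ∈ D
  · rw [if_pos hpD, if_pos (h hpD)]; exact h
  · rw [if_neg hpD]
    by_cases hDe : D = ∅
    · rw [if_pos hDe, hDe]
      exact Finset.empty_subset _
    · rw [if_neg hDe]
      have hD : D.Nonempty := Finset.nonempty_iff_ne_empty.mpr hDe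
      by_cases hpC : r (t+1) ∈ C
      · rw [if_pos hpC]
        intro x hx
        rcases Finset.mem_insert.mp hx with rfl | hx
        · exact hpC
        · exact h (Finset.mem_of_mem_erase hx)
      · rw [if_neg hpC, if_neg (Finset.nonempty_iff_ne_empty.mp hC)]
        intro x hx
        rcases Finset.mem_insert.mp hx with rfl | hx
        · exact Finset.mem_insert_self _ _
        · apply Finset.mem_insert_of_mem
          have hxD := Finset.mem_of_mem_erase hx
          have hxv : x ≠ victim r (t+1) D := Finset.ne_of_mem_erase hx
          rw [Finset.mem_erase]
          refine ⟨?_, h hxD⟩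
          intro hxw
          -- x = victim of C, but x ∈ D, so victim of C ∈ D
          have hwD : victim r (t+1) C ∈ D := hxw ▸ hxD
          have h1 : fifKey r (t+1) (victim r (t+1) C) ≤ fifKey r (t+1) (victim r (t+1) D) :=
            (victim_spec r (t+1) D hD).2 _ hwD
          have h2 : fifKey r (t+1) (victim r (t+1) D) ≤ fifKey r (t+1) (victim r (t+1) C) :=
            (victim_spec r (t+1) C hC).2 _ (h (victim_spec r (t+1) D hD).1)
          have : victim r (t+1) C = victim r (t+1) D :=
            fifKey_inj r (t+1) (le_antisymm h1 h2)
          exact hxv (hxw.trans this)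

lemma card_fifStep (r : ℕ → ℕ) (t : ℕ) (C : Finset ℕ) :
    (fifStep r t C).card = C.card := by
  unfold fifStep
  by_cases h1 : r (t+1) ∈ C
  · rw [if_pos h1]
  · rw [if_neg h1]
    by_cases h2 : C = ∅
    · rw [if_pos h2]
    · rw [if_neg h2]
      have hC : C.Nonempty := Finset.nonempty_iff_ne_empty.mpr h2
      have hv := (victim_spec r (t+1) C hC).1
      have hpos : 0 < C.card := Finset.card_pos.mpr hC
      rw [Finset.card_insert_of_notMem (fun hx => h1 (Finset.mem_of_mem_erase hx)),
          Finset.card_erase_of_mem hv]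
      omega

lemma card_fifCache (r : ℕ → ℕ) (C0 : Finset ℕ) (t : ℕ) :
    (fifCache r C0 t).card = C0.card := by
  induction t with
  | zero => rfl
  | succ t ih =>
    show (fifStep r t (fifCache r C0 t)).card = C0.card
    rw [card_fifStep, ih]

/-- **Consistency of Belady's algorithm across cache sizes.**
If FiF is run with every cache size simultaneously on the same request sequence,
starting from nested initial configurations with `|C^m_0| = m`, then at every time `t`
the configurations remain (strictly) nested: `C^{m-1}_t ⊂ C^m_t` for all `m ≥ 1`. -/
theorem fif_consistency (r : ℕ → ℕ) (C0 : ℕ → Finset ℕ)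
    (hnest : ∀ m, C0 m ⊆ C0 (m+1)) (hcard : ∀ m, (C0 m).card = m) :
    ∀ t m, 1 ≤ m → fifCache r (C0 (m-1)) t ⊂ fifCache r (C0 m) t := by
  have hcards : ∀ t m, (fifCache r (C0 m) t).card = m := by
    intro t m; rw [card_fifCache, hcard]
  intro t
  induction t with
  | zero =>
    intro m hm
    have hsub : C0 (m-1) ⊆ C0 m := by
      have := hnest (m-1)
      rwa [Nat.sub_add_cancel hm] at this
    refine hsub.ssubset_of_ne ?_
    intro heq
    have h1 := hcard (m-1)
    have h2 := hcard m
    rw [heq, h2] at h1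
    omega
  | succ t ih =>
    intro m hm
    have ihm := ih m hm
    have hC : (fifCache r (C0 m) t).Nonempty := by
      rw [← Finset.card_pos, hcards]; omega
    have hsub : fifStep r t (fifCache r (C0 (m-1)) t) ⊆ fifStep r t (fifCache r (C0 m) t) :=
      fifStep_subset r t ihm.subset hC
    have hsub' : fifCache r (C0 (m-1)) (t+1) ⊆ fifCache r (C0 m) (t+1) := hsub
    refine hsub'.ssubset_of_ne ?_
    intro heq
    have h1 := hcards (t+1) (m-1)
    have h2 := hcards (t+1) m
    rw [heq, h2] at h1
    omega
end

section
/- For every sequence $h_1, h_2, \ldots$ of positive integers satisfying the repeat property, there exists a paging request sequence $r_1, r_2, \ldots$ whose induced position sequence (positions in the Belady ranking just before each request) equals $h_1, h_2, \ldots$. -/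
noncomputable section
namespace PSRealize

variable (h : ℕ → ℕ) (n : ℕ)

/-- Permutation of slots: composition of transpositions `(1, h t)`. -/
def tokP : ℕ → Equiv.Perm ℕ
  | 0 => 1
  | t+1 => tokP t * Equiv.swap 1 (h t)

/-- `tok t s` = the token sitting at slot `s` at time `t`. -/
def tok (t s : ℕ) : ℕ := tokP h t s

lemma tok_zero (s : ℕ) : tok h 0 s = s := rfl

lemma tok_succ (t s : ℕ) : tok h (t+1) s = tok h t (Equiv.swap 1 (h t) s) := by
  simp [tok, tokP, Equiv.Perm.mul_apply]

lemma tok_succ_one (t : ℕ) : tok h (t+1) 1 = tok h t (h t) := by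
  rw [tok_succ, Equiv.swap_apply_left]

lemma tok_succ_ht (t : ℕ) : tok h (t+1) (h t) = tok h t 1 := by
  rw [tok_succ, Equiv.swap_apply_right]

lemma tok_succ_fix {s : ℕ} (t : ℕ) (h1 : s ≠ 1) (h2 : s ≠ h t) :
    tok h (t+1) s = tok h t s := by
  rw [tok_succ, Equiv.swap_apply_of_ne_of_ne h1 h2]

lemma tok_inj {t a b : ℕ} (H : tok h t a = tok h t b) : a = b :=
  (tokP h t).injective H

lemma tok_mem (hp : ∀ t, 1 ≤ h t) (hb : ∀ t, h t ≤ n) (t : ℕ) : ∀ {s}, 1 ≤ s → s ≤ n → 1 ≤ tok h t s ∧ tok h t s ≤ n := by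
  induction t with
  | zero => intro s h1 h2; exact ⟨h1, h2⟩
  | succ t ih =>
    intro s h1 h2
    rw [tok_succ]
    rcases eq_or_ne s 1 with rfl | hs1
    · rw [Equiv.swap_apply_left]; exact ih (hp t) (hb t)
    · rcases eq_or_ne s (h t) with rfl | hsh
      · rw [Equiv.swap_apply_right]; exact ih le_rfl (le_trans (hp t) (hb t))
      · rw [Equiv.swap_apply_of_ne_of_ne hs1 hsh]; exact ih h1 h2

/-- The token requested at step `t` (i.e. as request `r (t+1)`). -/
def q (t : ℕ) : ℕ := tok h t (h t)

lemma q_mem (hp : ∀ t, 1 ≤ h t) (hb : ∀ t, h t ≤ n) (t : ℕ) : 1 ≤ q h t ∧ q h t ≤ n := tok_mem h n hp hb t (hp t) (hb t)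

lemma q_ne_slot {u j : ℕ} (hne : h u ≠ j) : q h u ≠ tok h u j :=
  fun e => hne (tok_inj h e)

/-- A token at slot `j ≥ 2` stays there as long as `h` does not hit `j`. -/
lemma tok_stay {j : ℕ} (h2 : 2 ≤ j) {t : ℕ} :
    ∀ {v}, t ≤ v → (∀ u, t ≤ u → u < v → h u ≠ j) → tok h v j = tok h t j := by
  intro v
  induction v with
  | zero => intro hv _; have : t = 0 := by omega
            subst this; rfl
  | succ v ih =>
    intro hv hav
    rcases eq_or_lt_of_le hv with rfl | hlt
    · rfl
    · have htv : t ≤ v := by omega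
      rw [tok_succ_fix h v (by omega) (Ne.symm (hav v htv (by omega)))]
      exact ih htv (fun u hu1 hu2 => hav u hu1 (by omega))

open Classical in
/-- Last request time (as a request index `u+1`) of token `p`, when a final request exists. -/
def lastReq (p : ℕ) : ℕ :=
  if H : ∃ u, q h u = p ∧ ∀ v, u < v → q h v ≠ p then H.choose + 1 else 0

lemma lastReq_eq {u p : ℕ} (h1 : q h u = p) (h2 : ∀ v, u < v → q h v ≠ p) :
    lastReq h p = u + 1 := by
  have H : ∃ u, q h u = p ∧ ∀ v, u < v → q h v ≠ p := ⟨u, h1, h2⟩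
  rw [lastReq, dif_pos H]
  obtain ⟨e1, e2⟩ := H.choose_spec
  rcases lt_trichotomy H.choose u with hlt | heq | hgt
  · exact absurd h1 (e2 u hlt)
  · omega
  · exact absurd e1 (h2 _ hgt)

lemma lastReq_lt {p t : ℕ} (ht : 1 ≤ t) (hnp : ∀ u, t - 1 ≤ u → q h u ≠ p) :
    lastReq h p < t := by
  rw [lastReq]; split_ifs with H
  · obtain ⟨e1, e2⟩ := H.choose_spec
    have : H.choose < t - 1 := by
      by_contra hc
      exact hnp _ (by omega) e1
    omega
  · omega

lemma lastReq_eq_zero {p : ℕ} (hnp : ∀ u, q h u ≠ p) : lastReq h p = 0 := by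
  rw [lastReq, dif_neg]
  rintro ⟨u, e, -⟩
  exact hnp u e

/-- The page id of token `p`. -/
def emb (p : ℕ) : ℕ :=
  if p ≤ n then lastReq h p * (n+2) + (n+1-p) else (p-n) * (n+2)

lemma emb_mod_of_le {p : ℕ} (h1 : 1 ≤ p) (h2 : p ≤ n) :
    emb h n p % (n+2) = n + 1 - p := by
  rw [emb, if_pos h2, Nat.mul_comm, Nat.mul_add_mod]
  exact Nat.mod_eq_of_lt (by omega)

lemma emb_mod_of_gt {p : ℕ} (h2 : n < p) : emb h n p % (n+2) = 0 := by
  rw [emb, if_neg (by omega), Nat.mul_comm]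
  exact Nat.mul_mod_right _ _

lemma emb_inj {a b : ℕ} (ha : 1 ≤ a) (hb : 1 ≤ b) (e : emb h n a = emb h n b) :
    a = b := by
  by_cases h1 : a ≤ n <;> by_cases h2 : b ≤ n
  · have m1 := emb_mod_of_le h n ha h1
    have m2 := emb_mod_of_le h n hb h2
    rw [e, m2] at m1
    omega
  · have m1 := emb_mod_of_le h n ha h1
    have m2 := emb_mod_of_gt h n (by omega : n < b)
    rw [e, m2] at m1
    omega
  · have m1 := emb_mod_of_gt h n (by omega : n < a)
    have m2 := emb_mod_of_le h n hb h2
    rw [e, m2] at m1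
    omega
  · rw [emb, emb, if_neg h1, if_neg h2] at e
    have := Nat.eq_of_mul_eq_mul_right (show 0 < n + 2 by omega) e
    omega

/-- The request sequence. -/
def req : ℕ → ℕ
  | 0 => emb h n 1
  | t+1 => emb h n (q h t)

/-- The nested initial configurations. -/
def C0 (m : ℕ) : Finset ℕ := (Finset.Icc 1 m).image (emb h n)

lemma req_succ (t : ℕ) : req h n (t+1) = emb h n (q h t) := rfl

lemma nextReq_top (hp : ∀ t, 1 ≤ h t) (hb : ∀ t, h t ≤ n) {t j : ℕ}
    (h2 : 2 ≤ j) (hjn : j ≤ n) (hno : ∀ u, t + 1 ≤ u → h u ≠ j) :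
    nextReq (req h n) (t+1) (emb h n (tok h (t+1) j)) = ⊤ := by
  have hS : {s : ℕ | t + 1 < s ∧ req h n s = emb h n (tok h (t+1) j)} = ∅ := by
    ext s
    simp only [Set.mem_setOf_eq, Set.mem_empty_iff_false, iff_false, not_and]
    intro hs hreq
    obtain ⟨u, rfl⟩ : ∃ u, s = u + 1 := ⟨s - 1, by omega⟩
    have hu : t + 1 ≤ u := by omega
    rw [req_succ] at hreq
    have hq1 : 1 ≤ q h u := (q_mem h n hp hb u).1
    have ht1 : 1 ≤ tok h (t+1) j := (tok_mem h n hp hb (t+1) (by omega) hjn).1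
    have heq : q h u = tok h (t+1) j := emb_inj h n hq1 ht1 hreq
    have hstay : tok h u j = tok h (t+1) j :=
      tok_stay h h2 hu (fun u' hu1' _ => hno u' hu1')
    rw [← hstay] at heq
    exact q_ne_slot h (hno u hu) heq
  rw [nextReq, hS, Set.image_empty, sInf_empty]

lemma nextReq_fin (hp : ∀ t, 1 ≤ h t) (hb : ∀ t, h t ≤ n) {t j u1 : ℕ}
    (h2 : 2 ≤ j) (hjn : j ≤ n) (hu1 : t + 1 ≤ u1) (hju : h u1 = j)
    (hmin : ∀ u, t + 1 ≤ u → u < u1 → h u ≠ j) :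
    nextReq (req h n) (t+1) (emb h n (tok h (t+1) j)) = ((u1 + 1 : ℕ) : ℕ∞) := by
  have hstay : tok h u1 j = tok h (t+1) j :=
    tok_stay h h2 hu1 (fun u hu1' hu2 => hmin u hu1' hu2)
  apply le_antisymm
  · apply sInf_le
    refine ⟨u1 + 1, ⟨by omega, ?_⟩, rfl⟩
    rw [req_succ]
    congr 1
    rw [q, hju, hstay]
  · apply le_sInf
    rintro b ⟨s, ⟨hs1, hs2⟩, rfl⟩
    rw [Nat.cast_le]
    by_contra hc
    push_neg at hc
    obtain ⟨u, rfl⟩ : ∃ u, s = u + 1 := ⟨s - 1, by omega⟩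
    have hu : t + 1 ≤ u := by omega
    have hult : u < u1 := by omega
    rw [req_succ] at hs2
    have hq1 : 1 ≤ q h u := (q_mem h n hp hb u).1
    have ht1 : 1 ≤ tok h (t+1) j := (tok_mem h n hp hb (t+1) (by omega) hjn).1
    have heq : q h u = tok h (t+1) j := emb_inj h n hq1 ht1 hs2
    have hstay2 : tok h u j = tok h (t+1) j :=
      tok_stay h h2 hu (fun u' hu1' hu2' => hmin u' hu1' (by omega))
    rw [← hstay2] at heq
    exact q_ne_slot h (hmin u hu hult) heq

lemma dead_lt (hp : ∀ t, 1 ≤ h t) (hb : ∀ t, h t ≤ n) {t j : ℕ}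
    (hj2 : 2 ≤ j) (hjlt : j < h t)
    (Hx : ∀ u, t + 1 ≤ u → h u ≠ h t) (Hy : ∀ u, t + 1 ≤ u → h u ≠ j) :
    emb h n (tok h t j) < emb h n (tok h t 1) := by
  have hjn : j ≤ n := le_trans (le_of_lt hjlt) (hb t)
  have hn1 : 1 ≤ n := le_trans (hp t) (hb t)
  have hy := tok_mem h n hp hb t (by omega : 1 ≤ j) hjn
  have hx := tok_mem h n hp hb t le_rfl hn1
  have ht3 : 3 ≤ h t := by omega
  rcases Nat.eq_zero_or_pos t with rfl | htpos
  · -- t = 0 : both tokens never requested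
    have Qy : ∀ u, q h u ≠ j := by
      intro u
      have hstay : tok h u j = j := by
        have := tok_stay h hj2 (Nat.zero_le u)
          (fun u' _ hu' => by
            rcases Nat.eq_zero_or_pos u' with rfl | hu'pos
            · omega
            · exact Hy u' (by omega))
        rwa [tok_zero] at this
      have hne : h u ≠ j := by
        rcases Nat.eq_zero_or_pos u with rfl | hupos
        · omega
        · exact Hy u (by omega)
      exact fun e => q_ne_slot h hne (e.trans hstay.symm)
    have Qx : ∀ u, q h u ≠ 1 := by
      intro u
      rcases Nat.eq_zero_or_pos u with rfl | hupos
      · show tok h 0 (h 0) ≠ 1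
        rw [tok_zero]; omega
      · have hstay : tok h u (h 0) = 1 := by
          have h1 : tok h 1 (h 0) = 1 := tok_succ_ht h 0
          have := tok_stay h (by omega : 2 ≤ h 0) (by omega : 1 ≤ u)
            (fun u' hu1 _ => Hx u' (by omega))
          rw [this, h1]
        have hne : h u ≠ h 0 := Hx u (by omega)
        exact fun e => q_ne_slot h hne (e.trans hstay.symm)
    rw [tok_zero, tok_zero]
    rw [emb, if_pos hjn, emb, if_pos hn1,
      lastReq_eq_zero h Qy, lastReq_eq_zero h Qx]
    omega
  · -- t ≥ 1
    obtain ⟨t', rfl⟩ : ∃ t', t = t' + 1 := ⟨t - 1, by omega⟩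
    have Ex : lastReq h (tok h (t'+1) 1) = t' + 1 := by
      apply lastReq_eq h (u := t')
      · exact (tok_succ_one h t').symm
      · intro v hv
        rcases eq_or_lt_of_le (show t' + 1 ≤ v by omega) with rfl | hvgt
        · exact q_ne_slot h (by omega : h (t'+1) ≠ 1)
        · have hstay : tok h v (h (t'+1)) = tok h (t'+1) 1 := by
            rw [tok_stay h (show 2 ≤ h (t'+1) by omega)
              (show t'+1+1 ≤ v by omega) (fun u hu1 _ => Hx u hu1), tok_succ_ht]
          exact fun e => q_ne_slot h (Hx v (by omega)) (e.trans hstay.symm)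
    have Ey : lastReq h (tok h (t'+1) j) < t' + 1 := by
      apply lastReq_lt h (by omega : 1 ≤ t' + 1)
      intro u hu
      rcases eq_or_lt_of_le (show t' ≤ u by omega) with rfl | hugt
      · intro e
        have : (1 : ℕ) = j := tok_inj h ((tok_succ_one h t').trans e)
        omega
      · have hstay : tok h u j = tok h (t'+1) j :=
          tok_stay h hj2 (show t' + 1 ≤ u by omega)
            (fun u' hu1 hu2 => by
              rcases eq_or_lt_of_le hu1 with rfl | hgt
              · omega
              · exact Hy u' (by omega))
        have hne : h u ≠ j := by
          rcases eq_or_lt_of_le (show t' + 1 ≤ u by omega) with rfl | hgt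
          · omega
          · exact Hy u (by omega)
        exact fun e => q_ne_slot h hne (e.trans hstay.symm)
    rw [emb, if_pos hy.2, emb, if_pos hx.2, Ex]
    calc lastReq h (tok h (t'+1) j) * (n+2) + (n+1 - tok h (t'+1) j)
        < (lastReq h (tok h (t'+1) j) + 1) * (n+2) := by rw [Nat.succ_mul]; omega
      _ ≤ (t'+1) * (n+2) := Nat.mul_le_mul_right _ (by omega)
      _ ≤ (t'+1) * (n+2) + (n+1 - tok h (t'+1) 1) := Nat.le_add_right _ _

lemma victim_eq (hp : ∀ t, 1 ≤ h t) (hb : ∀ t, h t ≤ n)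
    (hrep : ∀ t1 t2, t1 < t2 → h t1 = h t2 →
      ∀ v, 2 ≤ v → v < h t1 → ∃ s, t1 < s ∧ s < t2 ∧ h s = v)
    {t m : ℕ} (h1m : 1 ≤ m) (hm : m < h t) :
    victim (req h n) (t+1) ((Finset.Icc 1 m).image (fun s => emb h n (tok h t s)))
      = emb h n (tok h t 1) := by
  set C : Finset ℕ := (Finset.Icc 1 m).image (fun s => emb h n (tok h t s)) with hC
  have hht2 : 2 ≤ h t := by omega
  have hhtn : h t ≤ n := hb t
  have hxslot : tok h t 1 = tok h (t+1) (h t) := (tok_succ_ht h t).symm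
  have hxC : emb h n (tok h t 1) ∈ C :=
    Finset.mem_image.mpr ⟨1, Finset.mem_Icc.mpr ⟨le_rfl, h1m⟩, rfl⟩
  have hCne : C.Nonempty := ⟨_, hxC⟩
  have hmax : ∀ y ∈ C, y ≠ emb h n (tok h t 1) →
      fifKey (req h n) (t+1) y < fifKey (req h n) (t+1) (emb h n (tok h t 1)) := by
    rintro y hy hne
    obtain ⟨s, hs, rfl⟩ := Finset.mem_image.mp hy
    rw [Finset.mem_Icc] at hs
    have hsne1 : s ≠ 1 := fun e => hne (by rw [e])
    have hs2 : 2 ≤ s := by omega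
    have hslt : s < h t := by omega
    have hsn : s ≤ n := by omega
    have hfix : tok h t s = tok h (t+1) s := (tok_succ_fix h t (by omega) (by omega)).symm
    rw [fifKey, fifKey, Prod.Lex.lt_iff]
    by_cases Hx : ∃ u, t + 1 ≤ u ∧ h u = h t
    · -- the old front token is requested again
      set u1 := sInf {u | t + 1 ≤ u ∧ h u = h t} with hu1
      have hu1mem : t + 1 ≤ u1 ∧ h u1 = h t := Nat.sInf_mem Hx
      have hu1min : ∀ u, t + 1 ≤ u → u < u1 → h u ≠ h t :=
        fun u ha hb' hc => Nat.notMem_of_lt_sInf hb' ⟨ha, hc⟩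
      have hXval : nextReq (req h n) (t+1) (emb h n (tok h t 1)) = ((u1 + 1 : ℕ) : ℕ∞) := by
        rw [hxslot]
        exact nextReq_fin h n hp hb hht2 hhtn hu1mem.1 hu1mem.2 hu1min
      obtain ⟨w, hw1, hw2, hw3⟩ := hrep t u1 (by omega) hu1mem.2.symm s hs2 hslt
      have HyEx : ∃ u, t + 1 ≤ u ∧ h u = s := ⟨w, by omega, hw3⟩
      set u2 := sInf {u | t + 1 ≤ u ∧ h u = s} with hu2
      have hu2mem : t + 1 ≤ u2 ∧ h u2 = s := Nat.sInf_mem HyEx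
      have hu2min : ∀ u, t + 1 ≤ u → u < u2 → h u ≠ s :=
        fun u ha hb' hc => Nat.notMem_of_lt_sInf hb' ⟨ha, hc⟩
      have hu2lt : u2 < u1 := lt_of_le_of_lt (Nat.sInf_le ⟨by omega, hw3⟩) hw2
      have hYval : nextReq (req h n) (t+1) (emb h n (tok h t s)) = ((u2 + 1 : ℕ) : ℕ∞) := by
        rw [hfix]
        exact nextReq_fin h n hp hb hs2 hsn hu2mem.1 hu2mem.2 hu2min
      left
      show nextReq (req h n) (t+1) (emb h n (tok h t s))
        < nextReq (req h n) (t+1) (emb h n (tok h t 1))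
      rw [hXval, hYval]
      exact_mod_cast (by omega : u2 + 1 < u1 + 1)
    · push_neg at Hx
      have hXval : nextReq (req h n) (t+1) (emb h n (tok h t 1)) = ⊤ := by
        rw [hxslot]
        exact nextReq_top h n hp hb hht2 hhtn Hx
      by_cases Hy : ∃ u, t + 1 ≤ u ∧ h u = s
      · set u2 := sInf {u | t + 1 ≤ u ∧ h u = s} with hu2
        have hu2mem : t + 1 ≤ u2 ∧ h u2 = s := Nat.sInf_mem Hy
        have hu2min : ∀ u, t + 1 ≤ u → u < u2 → h u ≠ s :=
          fun u ha hb' hc => Nat.notMem_of_lt_sInf hb' ⟨ha, hc⟩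
        have hYval : nextReq (req h n) (t+1) (emb h n (tok h t s)) = ((u2 + 1 : ℕ) : ℕ∞) := by
          rw [hfix]
          exact nextReq_fin h n hp hb hs2 hsn hu2mem.1 hu2mem.2 hu2min
        left
        show nextReq (req h n) (t+1) (emb h n (tok h t s))
          < nextReq (req h n) (t+1) (emb h n (tok h t 1))
        rw [hXval, hYval]
        exact Ne.lt_top (by
          intro hcontra
          exact (WithTop.natCast_ne_top (u2+1)) hcontra)
      · push_neg at Hy
        have hYval : nextReq (req h n) (t+1) (emb h n (tok h t s)) = ⊤ := by
          rw [hfix]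
          exact nextReq_top h n hp hb hs2 hsn Hy
        right
        constructor
        · show nextReq (req h n) (t+1) (emb h n (tok h t s))
            = nextReq (req h n) (t+1) (emb h n (tok h t 1))
          rw [hXval, hYval]
        · exact dead_lt h n hp hb hs2 hslt Hx Hy
  rw [victim, dif_pos hCne]
  have spec := Classical.choose_spec (C.exists_max_image (fifKey (req h n) (t+1)) hCne)
  obtain ⟨hmem, hbd⟩ := spec
  by_contra hne
  exact absurd (hbd _ hxC) (not_le.mpr (hmax _ hmem hne))

lemma swap_image {v m : ℕ} (h1 : 1 ≤ v) (h2 : v ≤ m) :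
    (Finset.Icc 1 m).image (fun s => Equiv.swap 1 v s) = Finset.Icc 1 m := by
  have key : ∀ s, s ∈ Finset.Icc 1 m → Equiv.swap 1 v s ∈ Finset.Icc 1 m := by
    intro s hs
    rw [Finset.mem_Icc] at hs ⊢
    rcases eq_or_ne s 1 with rfl | e1
    · rw [Equiv.swap_apply_left]; omega
    rcases eq_or_ne s v with rfl | e2
    · rw [Equiv.swap_apply_right]; omega
    · rw [Equiv.swap_apply_of_ne_of_ne e1 e2]; omega
  apply Finset.Subset.antisymm
  · intro x hx
    obtain ⟨s, hs, rfl⟩ := Finset.mem_image.mp hx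
    exact key s hs
  · intro x hx
    refine Finset.mem_image.mpr ⟨Equiv.swap 1 v x, key _ hx, ?_⟩
    rw [Equiv.swap_apply_self]

theorem cache_eq (hp : ∀ t, 1 ≤ h t) (hb : ∀ t, h t ≤ n)
    (hrep : ∀ t1 t2, t1 < t2 → h t1 = h t2 →
      ∀ v, 2 ≤ v → v < h t1 → ∃ s, t1 < s ∧ s < t2 ∧ h s = v) :
    ∀ t m, fifCache (req h n) (C0 h n m) t
      = (Finset.Icc 1 m).image (fun s => emb h n (tok h t s)) := by
  intro t
  induction t with
  | zero =>
    intro m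
    show C0 h n m = _
    rw [C0]
    exact (Finset.image_congr (fun s _ => by rw [tok_zero])).symm
  | succ t ih =>
    intro m
    show fifStep (req h n) t (fifCache (req h n) (C0 h n m) t) = _
    rw [ih m]
    by_cases hm : h t ≤ m
    · -- hit
      have hxmem : req h n (t+1) ∈ (Finset.Icc 1 m).image (fun s => emb h n (tok h t s)) :=
        Finset.mem_image.mpr ⟨h t, Finset.mem_Icc.mpr ⟨hp t, hm⟩, rfl⟩
      rw [fifStep, if_pos hxmem]
      symm
      calc (Finset.Icc 1 m).image (fun s => emb h n (tok h (t+1) s))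
          = (Finset.Icc 1 m).image
              ((fun s => emb h n (tok h t s)) ∘ (fun s => Equiv.swap 1 (h t) s)) :=
            Finset.image_congr (fun s _ => by simp [tok_succ])
        _ = ((Finset.Icc 1 m).image (fun s => Equiv.swap 1 (h t) s)).image
              (fun s => emb h n (tok h t s)) := (Finset.image_image).symm
        _ = (Finset.Icc 1 m).image (fun s => emb h n (tok h t s)) := by
              rw [swap_image (hp t) hm]
    · -- fault
      push_neg at hm
      have hxnot : req h n (t+1) ∉ (Finset.Icc 1 m).image (fun s => emb h n (tok h t s)) := by
        intro hmem
        obtain ⟨s, hsI, he⟩ := Finset.mem_image.mp hmem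
        rw [Finset.mem_Icc] at hsI
        have hhtn := hb t
        have h1 : 1 ≤ tok h t s := (tok_mem h n hp hb t hsI.1 (by omega)).1
        have h2 : 1 ≤ q h t := (q_mem h n hp hb t).1
        have := tok_inj h (emb_inj h n h1 h2 he)
        omega
      rw [fifStep, if_neg hxnot]
      rcases Nat.eq_zero_or_pos m with rfl | h1m
      · rw [if_pos] <;> simp [Finset.Icc_eq_empty_of_lt (by omega : (1:ℕ) > 0)]
      · have hCne : (Finset.Icc 1 m).image (fun s => emb h n (tok h t s)) ≠ ∅ :=
          Finset.nonempty_iff_ne_empty.mp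
            ⟨_, Finset.mem_image.mpr ⟨1, Finset.mem_Icc.mpr ⟨le_rfl, h1m⟩, rfl⟩⟩
        rw [if_neg hCne, victim_eq h n hp hb hrep h1m hm]
        have hIcc : Finset.Icc 1 m = (Finset.Ioc 1 m).cons 1 Finset.left_notMem_Ioc :=
          Finset.Icc_eq_cons_Ioc h1m
        rw [hIcc, Finset.cons_eq_insert, Finset.image_insert, Finset.image_insert]
        have hnot : emb h n (tok h t 1)
            ∉ (Finset.Ioc 1 m).image (fun s => emb h n (tok h t s)) := by
          intro hmem
          obtain ⟨s, hsI, he⟩ := Finset.mem_image.mp hmem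
          rw [Finset.mem_Ioc] at hsI
          have hhtn := hb t
          have h1 : 1 ≤ tok h t s := (tok_mem h n hp hb t (by omega) (by omega)).1
          have h2 : 1 ≤ tok h t 1 :=
            (tok_mem h n hp hb t le_rfl (le_trans (hp t) (hb t))).1
          have := tok_inj h (emb_inj h n h1 h2 he)
          omega
        rw [Finset.erase_insert hnot]
        have hf'1 : emb h n (tok h (t+1) 1) = req h n (t+1) := by
          rw [tok_succ_one]; rfl
        have himg : (Finset.Ioc 1 m).image (fun s => emb h n (tok h (t+1) s))
            = (Finset.Ioc 1 m).image (fun s => emb h n (tok h t s)) :=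
          Finset.image_congr (fun s hs => by
            rw [Finset.mem_coe, Finset.mem_Ioc] at hs
            rw [tok_succ_fix h t (by omega) (by omega)])
        rw [hf'1, himg]

end PSRealize

/-- **Every sequence with the repeat property is a position sequence.**
For any (bounded) sequence `h` of positive integers satisfying the repeat property, there
is a paging request sequence `r` (over a universe given by nested initial configurations)
whose induced sequence of positions in the Belady ranking just before each request
equals `h`. -/
theorem position_sequence_realizable
    (h : ℕ → ℕ) (n : ℕ) (hpos : ∀ t, 1 ≤ h t) (hbd : ∀ t, h t ≤ n)
    (hrep : ∀ t1 t2, t1 < t2 → h t1 = h t2 →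
      ∀ v, 2 ≤ v → v < h t1 → ∃ s, t1 < s ∧ s < t2 ∧ h s = v) :
    ∃ (r : ℕ → ℕ) (C0 : ℕ → Finset ℕ),
      (∀ m, C0 m ⊆ C0 (m+1)) ∧ (∀ m, (C0 m).card = m) ∧ (∀ s, r s ∈ C0 n) ∧
      ∀ t, beladyPos r C0 t (r (t+1)) = h t := by
  have hn1 : 1 ≤ n := le_trans (hpos 0) (hbd 0)
  refine ⟨PSRealize.req h n, PSRealize.C0 h n, ?_, ?_, ?_, ?_⟩
  · intro m
    exact Finset.image_subset_image (Finset.Icc_subset_Icc_right (by omega))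
  · intro m
    rw [PSRealize.C0, Finset.card_image_of_injOn, Nat.card_Icc]
    · omega
    · intro a ha b hb' e
      rw [Finset.mem_coe, Finset.mem_Icc] at ha hb'
      exact PSRealize.emb_inj h n ha.1 hb'.1 e
  · intro s
    match s with
    | 0 =>
      exact Finset.mem_image.mpr ⟨1, Finset.mem_Icc.mpr ⟨le_rfl, hn1⟩, rfl⟩
    | s+1 =>
      have := PSRealize.q_mem h n hpos hbd s
      exact Finset.mem_image.mpr ⟨PSRealize.q h s, Finset.mem_Icc.mpr ⟨this.1, this.2⟩, rfl⟩
  · intro t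
    have hmem_iff : ∀ m,
        (PSRealize.req h n (t+1) ∈ fifCache (PSRealize.req h n) (PSRealize.C0 h n m) t)
          ↔ h t ≤ m := by
      intro m
      rw [PSRealize.cache_eq h n hpos hbd hrep t m]
      constructor
      · intro hmem
        obtain ⟨s, hsI, he⟩ := Finset.mem_image.mp hmem
        rw [Finset.mem_Icc] at hsI
        by_contra hc
        push_neg at hc
        have hhtn := hbd t
        have h1 : 1 ≤ PSRealize.tok h t s :=
          (PSRealize.tok_mem h n hpos hbd t hsI.1 (by omega)).1
        have h2 : 1 ≤ PSRealize.q h t := (PSRealize.q_mem h n hpos hbd t).1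
        have := PSRealize.tok_inj h (PSRealize.emb_inj h n h1 h2 he)
        omega
      · intro hle
        exact Finset.mem_image.mpr ⟨h t, Finset.mem_Icc.mpr ⟨hpos t, hle⟩, rfl⟩
    rw [beladyPos]
    have hset : {m | PSRealize.req h n (t+1)
        ∈ fifCache (PSRealize.req h n) (PSRealize.C0 h n m) t} = Set.Ici (h t) :=
      Set.ext (fun m => (hmem_iff m).trans Set.mem_Ici.symm)
    rw [hset, csInf_Ici]
end
end

section
/- Let $h_1, h_2, \ldots$ be a sequence of positive integers satisfying the repeat property, let $w > 0$, and for each $t$ and nonnegative integer $m$ define $f_t(m) = w$ if $m < h_t$ and $f_t(m) = 0$ otherwise. Then for any interval $I = [t_1, t_2]$ of indices and any integer $m \geq 2$, with $f_I(m) := \sum_{t \in I} f_t(m)$, it holds that $f_I(m-1) - f_I(m) \geq f_I(m) - f_I(m+1) - w$. -/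
/-- Cumulative threshold cost over the index interval `[t1, t2]`:
`fI h w t1 t2 m = ∑_{t ∈ [t1,t2]} f_t(m)` where `f_t(m) = w` if `m < h t` and `0` otherwise. -/
noncomputable def fI (h : ℕ → ℕ) (w : ℝ) (t1 t2 m : ℕ) : ℝ :=
  ∑ t ∈ Finset.Icc t1 t2, if m < h t then w else 0

/-- **Amortized convexity.**
If the sequence `h` of positive integers satisfies the repeat property, then for any interval
`I = [t1, t2]` of indices and any `m ≥ 2`, the cumulative threshold cost satisfies
`f_I(m-1) - f_I(m) ≥ f_I(m) - f_I(m+1) - w`. -/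
theorem amortized_convexity
    (h : ℕ → ℕ) (hpos : ∀ t, 1 ≤ h t)
    (hrep : ∀ t1 t2, t1 < t2 → h t1 = h t2 →
      ∀ v, 2 ≤ v → v < h t1 → ∃ s, t1 < s ∧ s < t2 ∧ h s = v)
    (w : ℝ) (hw : 0 < w) (t1 t2 m : ℕ) (hm : 2 ≤ m) :
    fI h w t1 t2 (m-1) - fI h w t1 t2 m ≥ fI h w t1 t2 m - fI h w t1 t2 (m+1) - w := by
  classical
  set I : Finset ℕ := Finset.Icc t1 t2 with hI
  set A : Finset ℕ := I.filter (fun t => h t = m+1) with hAdef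
  set B : Finset ℕ := I.filter (fun t => h t = m) with hBdef
  -- the general difference formula
  have eq1 : ∀ (k : ℕ), fI h w t1 t2 k - fI h w t1 t2 (k+1)
      = w * ((I.filter (fun t => h t = k+1)).card : ℝ) := by
    intro k
    unfold fI
    rw [← Finset.sum_sub_distrib]
    have : ∀ t ∈ I, ((if k < h t then w else 0) - (if k+1 < h t then w else 0))
        = (if h t = k+1 then w else 0) := by
      intro t _
      by_cases hc : h t = k + 1
      · have h1 : k < h t := by omega
        have h2 : ¬ (k + 1 < h t) := by omega
        simp [hc, h1, h2]
      · by_cases h1 : k < h t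
        · have h2 : k + 1 < h t := by omega
          simp [hc, h1, h2]
        · have h2 : ¬ (k + 1 < h t) := by omega
          simp [hc, h1, h2]
    rw [Finset.sum_congr rfl this, ← Finset.sum_filter, Finset.sum_const,
      nsmul_eq_mul, mul_comm]
  -- the key counting fact : A.card ≤ B.card + 1
  have key : A.card ≤ B.card + 1 := by
    rcases A.eq_empty_or_nonempty with hAe | hAne
    · simp [hAe]
    · set M := A.max' hAne with hM
      have hMA : M ∈ A := A.max'_mem hAne
      have hcard : (A.erase M).card ≤ B.card := by
        -- for each t in A.erase M, there is s in B with t < s and s below all later elements of A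
        have hex : ∀ t ∈ A.erase M, ∃ s, s ∈ B ∧ t < s ∧ ∀ u ∈ A, t < u → s < u := by
          intro t ht
          have htA : t ∈ A := Finset.mem_of_mem_erase ht
          have htM : t ≠ M := Finset.ne_of_mem_erase ht
          have htltM : t < M := lt_of_le_of_ne (A.le_max' t htA) htM
          have hne : ((A.filter (fun u => t < u))).Nonempty :=
            ⟨M, Finset.mem_filter.mpr ⟨hMA, htltM⟩⟩
          set u0 := (A.filter (fun u => t < u)).min' hne with hu0
          have hu0mem : u0 ∈ A.filter (fun u => t < u) := Finset.min'_mem _ hne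
          have hu0A : u0 ∈ A := (Finset.mem_filter.mp hu0mem).1
          have htu0 : t < u0 := (Finset.mem_filter.mp hu0mem).2
          have hht : h t = m + 1 := (Finset.mem_filter.mp htA).2
          have hhu0 : h u0 = m + 1 := (Finset.mem_filter.mp hu0A).2
          obtain ⟨s, hs1, hs2, hs3⟩ := hrep t u0 htu0 (hht.trans hhu0.symm) m hm (by omega)
          have htI : t ∈ I := (Finset.mem_filter.mp htA).1
          have hu0I : u0 ∈ I := (Finset.mem_filter.mp hu0A).1
          have hsI : s ∈ I := by
            rw [hI, Finset.mem_Icc] at *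
            constructor
            · exact le_of_lt (lt_of_le_of_lt htI.1 hs1)
            · exact le_of_lt (lt_of_lt_of_le hs2 hu0I.2)
          refine ⟨s, Finset.mem_filter.mpr ⟨hsI, hs3⟩, hs1, ?_⟩
          intro u huA htu
          have : u0 ≤ u := Finset.min'_le _ u (Finset.mem_filter.mpr ⟨huA, htu⟩)
          omega
        choose f hfB hflt hfbelow using hex
        apply Finset.card_le_card_of_injOn (fun t => if ht : t ∈ A.erase M then f t ht else 0)
        · intro t ht
          simp only [ht, dif_pos]
          rw [Finset.mem_coe, dif_pos (Finset.mem_coe.mp ht)]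
          exact hfB t _
        · intro a ha b hb hab
          simp only [Finset.mem_coe] at ha hb
          simp only [ha, hb, dif_pos] at hab
          by_contra hne'
          rcases lt_or_gt_of_ne hne' with hlt | hgt
          · have h1 : f a ha < b :=
              hfbelow a ha b (Finset.mem_of_mem_erase hb) hlt
            have h2 : b < f b hb := hflt b hb
            omega
          · have h1 : f b hb < a :=
              hfbelow b hb a (Finset.mem_of_mem_erase ha) hgt
            have h2 : a < f a ha := hflt a ha
            omega
      have := Finset.card_erase_of_mem hMA
      omega
  -- conclude
  have e1 : fI h w t1 t2 (m-1) - fI h w t1 t2 m = w * (B.card : ℝ) := by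
    have hm1 : m - 1 + 1 = m := by omega
    have := eq1 (m-1)
    rw [hm1] at this
    exact this
  have e2 : fI h w t1 t2 m - fI h w t1 t2 (m+1) = w * (A.card : ℝ) := eq1 m
  have hcast : (A.card : ℝ) ≤ (B.card : ℝ) + 1 := by exact_mod_cast key
  nlinarith [hw.le]
end

section
/- If a sequence of positive integers satisfies the repeat property, then for any contiguous interval of indices $I$ and any integers $2 \leq a < b$, the number of occurrences of the value $b$ among the terms indexed by $I$ is at most one more than the number of occurrences of the value $a$ among the terms indexed by $I$. -/
lemma repeat_property_counts_aux : ∀ n (S T : Finset ℕ), S.card ≤ n →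
    (∀ s1 ∈ S, ∀ s2 ∈ S, s1 < s2 → ∃ t ∈ T, s1 < t ∧ t < s2) →
    S.card ≤ T.card + 1 := by
  intro n
  induction n with
  | zero => intro S T hc _; omega
  | succ n ih =>
    intro S T hc H
    by_cases h1 : S.card ≤ 1
    · omega
    · push_neg at h1
      have hS : S.Nonempty := Finset.card_pos.mp (by omega)
      set m := S.min' hS with hm
      have hmS : m ∈ S := S.min'_mem hS
      have hS' : (S.erase m).Nonempty := by
        rw [← Finset.card_pos, Finset.card_erase_of_mem hmS]; omega
      set m2 := (S.erase m).min' hS' with hm2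
      have hm2S' : m2 ∈ S.erase m := Finset.min'_mem _ hS'
      have hm2S : m2 ∈ S := Finset.mem_of_mem_erase hm2S'
      have hmm2 : m < m2 :=
        lt_of_le_of_ne (S.min'_le _ hm2S) (Ne.symm (Finset.ne_of_mem_erase hm2S'))
      obtain ⟨t, htT, hmt, htm2⟩ := H m hmS m2 hm2S hmm2
      have key : ∀ s1 ∈ S.erase m, ∀ s2 ∈ S.erase m, s1 < s2 →
          ∃ t' ∈ T.erase t, s1 < t' ∧ t' < s2 := by
        intro s1 hs1 s2 hs2 h12
        obtain ⟨t', ht'T, h1t', ht'2⟩ :=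
          H s1 (Finset.mem_of_mem_erase hs1) s2 (Finset.mem_of_mem_erase hs2) h12
        refine ⟨t', Finset.mem_erase.mpr ⟨?_, ht'T⟩, h1t', ht'2⟩
        have : m2 ≤ s1 := Finset.min'_le _ _ hs1
        omega
      have hcard : (S.erase m).card ≤ n := by
        rw [Finset.card_erase_of_mem hmS]; omega
      have hrec := ih (S.erase m) (T.erase t) hcard key
      have h1' : (S.erase m).card = S.card - 1 := Finset.card_erase_of_mem hmS
      have h2' : (T.erase t).card = T.card - 1 := Finset.card_erase_of_mem htT
      have hT1 : 1 ≤ T.card := Finset.card_pos.mpr ⟨t, htT⟩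
      omega

/-- **Occurrence counts under the repeat property.**
If a sequence of positive integers satisfies the repeat property, then on any contiguous
interval of indices, any value `b` occurs at most one more time than any smaller
value `a` with `2 ≤ a < b`. -/
theorem repeat_property_counts
    (h : ℕ → ℕ) (hpos : ∀ t, 1 ≤ h t)
    (hrep : ∀ t1 t2, t1 < t2 → h t1 = h t2 →
      ∀ v, 2 ≤ v → v < h t1 → ∃ s, t1 < s ∧ s < t2 ∧ h s = v)
    (t1 t2 : ℕ) (a b : ℕ) (ha : 2 ≤ a) (hab : a < b) :
    ((Finset.Icc t1 t2).filter (fun t => h t = b)).card ≤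
      ((Finset.Icc t1 t2).filter (fun t => h t = a)).card + 1 := by
  apply repeat_property_counts_aux _ _ _ le_rfl
  intro s1 hs1 s2 hs2 h12
  simp only [Finset.mem_filter, Finset.mem_Icc] at hs1 hs2
  obtain ⟨⟨hl1, hr1⟩, hb1⟩ := hs1
  obtain ⟨⟨hl2, hr2⟩, hb2⟩ := hs2
  obtain ⟨s, hs1s, hss2, hsa⟩ := hrep s1 s2 h12 (hb1.trans hb2.symm) a ha (by omega)
  exact ⟨s, Finset.mem_filter.mpr ⟨Finset.mem_Icc.mpr ⟨by omega, by omega⟩, hsa⟩, hs1s, hss2⟩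
end

section
/- Let $\ell \geq 1$, $\delta = 1/\ell$, $\rho \in \mathbb{R}_{\geq 0}^{\ell}$ with $C = \sum_i \rho_i > 0$, and $x, y \in \Delta^{\ell - 1}$. Let $\widetilde{C} = \sum_i (\rho_i + x_i - y_i)_+$ and $L = \sum_i (x_i - y_i)_+$. Then $\sum_{i : x_i \geq y_i} \frac{\rho_i + x_i - y_i}{\rho_i + \delta(\rho_i + x_i - y_i)} \cdot \frac{\rho_i + \delta C}{C} \geq \frac{L}{C + L}$. -/
open Finset

lemma key_term (a d δ C L : ℝ) (ha : 0 ≤ a) (hd : 0 ≤ d) (hδ : 0 < δ)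
    (hC : 0 < C) (hLd : d ≤ L) :
    d / (C + L) ≤ (a + d) / (a + δ * (a + d)) * ((a + δ * C) / C) := by
  have hL : 0 ≤ L := hd.trans hLd
  rcases eq_or_lt_of_le (by positivity : (0:ℝ) ≤ a + δ * (a + d)) with h | h
  · have hm : 0 ≤ δ * (a + d) := by positivity
    have ha0 : a = 0 := by linarith
    have hd0 : d = 0 := by nlinarith
    simp [ha0, hd0]
  · rw [div_mul_div_comm, div_le_div_iff₀ (by positivity) (by positivity)]
    nlinarith [mul_nonneg (mul_nonneg ha ha) hC.le,
      mul_nonneg (mul_nonneg ha ha) hL,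
      mul_nonneg (mul_nonneg ha hd) hL,
      mul_nonneg (mul_nonneg hδ.le hC.le)
        (mul_nonneg (add_nonneg ha hd) (by linarith : (0:ℝ) ≤ C + L - d))]

/-- **Key inequality for the decrease of the primary potential.**
For `δ = 1/ℓ`, `ρ ≥ 0` with `C = ∑ ρᵢ > 0`, and `x, y` in the unit simplex with
`L = ∑ (xᵢ - yᵢ)₊`, one has
`∑_{i : xᵢ ≥ yᵢ} [(ρᵢ + xᵢ - yᵢ)/(ρᵢ + δ(ρᵢ + xᵢ - yᵢ))] ⋅ [(ρᵢ + δC)/C] ≥ L/(C+L)`.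
(Summands with vanishing denominator also have vanishing numerator and are `0`,
which is Lean's convention for division by zero.) -/
theorem primary_potential_decrease (ℓ : ℕ) (hl : 1 ≤ ℓ)
    (ρ x y : Fin ℓ → ℝ) (hρ : ∀ i, 0 ≤ ρ i) (hC : 0 < ∑ i, ρ i)
    (hx0 : ∀ i, 0 ≤ x i) (hx1 : ∑ i, x i = 1)
    (hy0 : ∀ i, 0 ≤ y i) (hy1 : ∑ i, y i = 1) :
    let δ : ℝ := (ℓ : ℝ)⁻¹
    let C : ℝ := ∑ i, ρ i
    let L : ℝ := ∑ i, max (x i - y i) 0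
    (∑ i ∈ univ.filter (fun i => y i ≤ x i),
        (ρ i + x i - y i) / (ρ i + δ * (ρ i + x i - y i)) * ((ρ i + δ * C) / C))
      ≥ L / (C + L) := by
  intro δ C L
  have hδ : 0 < δ := by
    have : (0:ℝ) < (ℓ:ℝ) := by exact_mod_cast Nat.pos_of_ne_zero (by omega)
    positivity
  have hL0 : 0 ≤ L := Finset.sum_nonneg fun i _ => le_max_right _ _
  have hLi : ∀ i, x i - y i ≤ L := fun i =>
    (le_max_left _ _).trans
      (Finset.single_le_sum (fun j _ => le_max_right (x j - y j) 0) (mem_univ i))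
  have hLsum : L = ∑ i ∈ univ.filter (fun i => y i ≤ x i), (x i - y i) := by
    rw [Finset.sum_filter]
    refine Finset.sum_congr rfl fun i _ => ?_
    by_cases h : y i ≤ x i
    · simp [h, max_eq_left (by linarith : (0:ℝ) ≤ x i - y i)]
    · simp [h, max_eq_right (by linarith : x i - y i ≤ (0:ℝ))]
  rw [ge_iff_le]
  have hstep : L / (C + L) = ∑ i ∈ univ.filter (fun i => y i ≤ x i), (x i - y i) / (C + L) := by
    rw [← Finset.sum_div, ← hLsum]
  rw [hstep]
  refine Finset.sum_le_sum fun i hi => ?_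
  have hyx : y i ≤ x i := (Finset.mem_filter.mp hi).2
  have := key_term (ρ i) (x i - y i) δ C L (hρ i) (by linarith) hδ hC (hLi i)
  calc (x i - y i) / (C + L)
      ≤ (ρ i + (x i - y i)) / (ρ i + δ * (ρ i + (x i - y i))) * ((ρ i + δ * C) / C) := this
    _ = (ρ i + x i - y i) / (ρ i + δ * (ρ i + x i - y i)) * ((ρ i + δ * C) / C) := by
        ring_nf
end

section
/- Let $\rho \in \mathbb{R}_{\geq 0}^{\ell}$ with $C = \sum_i \rho_i > 0$ and $x, y \in \Delta^{\ell - 1}$ with $L = \sum_i (x_i - y_i)_+$. Then $\sum_{i : \rho_i > 2(y_i - x_i)} \frac{\rho_i}{C} \geq \left[1 - \frac{2L}{C}\right]_+$. -/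
open Finset

/-- **Key inequality for the decrease of the scale-mismatch potential.**
For `ρ ≥ 0` with `C = ∑ ρᵢ > 0` and `x, y` in the unit simplex with `L = ∑ (xᵢ - yᵢ)₊`,
one has `∑_{i : ρᵢ > 2(yᵢ - xᵢ)} ρᵢ/C ≥ [1 - 2L/C]₊`. -/
theorem scale_mismatch_decrease (ℓ : ℕ)
    (ρ x y : Fin ℓ → ℝ) (hρ : ∀ i, 0 ≤ ρ i) (hC : 0 < ∑ i, ρ i)
    (hx0 : ∀ i, 0 ≤ x i) (hx1 : ∑ i, x i = 1)
    (hy0 : ∀ i, 0 ≤ y i) (hy1 : ∑ i, y i = 1) :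
    let C : ℝ := ∑ i, ρ i
    let L : ℝ := ∑ i, max (x i - y i) 0
    (∑ i ∈ univ.filter (fun i => 2 * (y i - x i) < ρ i), ρ i / C)
      ≥ max (1 - 2 * L / C) 0 := by
  intro C L
  have hCpos : (0:ℝ) < C := hC
  -- L equals the sum of (yᵢ - xᵢ)₊
  have hL : L = ∑ i, max (y i - x i) 0 := by
    have key : ∀ i : Fin ℓ, max (x i - y i) 0 = max (y i - x i) 0 + (x i - y i) := by
      intro i
      rcases le_total (x i) (y i) with h | h
      · rw [max_eq_right (by linarith), max_eq_left (by linarith)]; ring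
      · rw [max_eq_left (by linarith), max_eq_right (by linarith)]; ring
    calc L = ∑ i, (max (y i - x i) 0 + (x i - y i)) := Finset.sum_congr rfl (fun i _ => key i)
    _ = (∑ i, max (y i - x i) 0) + ((∑ i, x i) - ∑ i, y i) := by
        rw [Finset.sum_add_distrib, Finset.sum_sub_distrib]
    _ = ∑ i, max (y i - x i) 0 := by rw [hx1, hy1]; ring
  set p : Fin ℓ → Prop := fun i => 2 * (y i - x i) < ρ i with hp
  have hsplit : (∑ i ∈ univ.filter p, ρ i) + (∑ i ∈ univ.filter (fun i => ¬ p i), ρ i) = C :=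
    Finset.sum_filter_add_sum_filter_not univ p ρ
  have hcompl : (∑ i ∈ univ.filter (fun i => ¬ p i), ρ i) ≤ 2 * L := by
    have h1 : (∑ i ∈ univ.filter (fun i => ¬ p i), ρ i)
        ≤ ∑ i ∈ univ.filter (fun i => ¬ p i), 2 * max (y i - x i) 0 := by
      apply Finset.sum_le_sum
      intro i hi
      have : ¬ p i := (Finset.mem_filter.mp hi).2
      have h2 : ρ i ≤ 2 * (y i - x i) := not_lt.mp this
      have := le_max_left (y i - x i) 0
      linarith
    have h2 : (∑ i ∈ univ.filter (fun i => ¬ p i), 2 * max (y i - x i) 0)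
        ≤ ∑ i, 2 * max (y i - x i) 0 := by
      apply Finset.sum_le_sum_of_subset_of_nonneg (Finset.filter_subset _ _)
      intro i _ _
      have := le_max_right (y i - x i) 0
      linarith
    rw [hL, Finset.mul_sum]
    exact h1.trans h2
  have hmain : (∑ i ∈ univ.filter p, ρ i) ≥ C - 2 * L := by linarith
  have hdiv : (∑ i ∈ univ.filter p, ρ i / C) = (∑ i ∈ univ.filter p, ρ i) / C :=
    (Finset.sum_div _ _ _).symm
  rw [hdiv, ge_iff_le, max_le_iff]
  constructor
  · rw [show (1 - 2 * L / C) = (C - 2 * L) / C by field_simp]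
    exact (div_le_div_iff_of_pos_right hCpos).mpr hmain
  · exact div_nonneg (Finset.sum_nonneg fun i _ => hρ i) hCpos.le
end

section
/- Belady's Farthest-in-Future algorithm is optimal (1-competitive) for unweighted paging: for any request sequence and any offline algorithm with the same cache size and starting configuration, the number of page faults of FiF is at most the number of page faults of the offline algorithm. -/
section NextReq

variable (r : ℕ → ℕ)

lemma nextReq_le {t s p : ℕ} (hs : t < s) (h : r s = p) : nextReq r t p ≤ (s : ℕ∞) :=
  sInf_le ⟨s, ⟨hs, h⟩, rfl⟩

lemma le_nextReq {t p : ℕ} {a : ℕ∞} (h : ∀ s : ℕ, t < s → r s = p → a ≤ (s : ℕ∞)) :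
    a ≤ nextReq r t p :=
  le_sInf (by rintro x ⟨s, ⟨hs, hr⟩, rfl⟩; exact h s hs hr)

lemma succ_le_nextReq (t p : ℕ) : (((t+1 : ℕ)) : ℕ∞) ≤ nextReq r t p := by
  apply le_nextReq
  intro s hs _
  exact_mod_cast Nat.succ_le_of_lt hs

lemma nextReq_req (t : ℕ) : nextReq r t (r (t+1)) = (((t+1:ℕ)) : ℕ∞) :=
  le_antisymm (nextReq_le r (Nat.lt_succ_self t) rfl) (succ_le_nextReq r t _)

lemma nextReq_eq_of_ne {t p : ℕ} (h : p ≠ r (t+1)) :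
    nextReq r (t+1) p = nextReq r t p := by
  unfold nextReq
  congr 1
  ext x
  simp only [Set.mem_image, Set.mem_setOf_eq]
  constructor
  · rintro ⟨s, ⟨hs, hr⟩, rfl⟩
    exact ⟨s, ⟨Nat.lt_of_succ_lt hs, hr⟩, rfl⟩
  · rintro ⟨s, ⟨hs, hr⟩, rfl⟩
    refine ⟨s, ⟨?_, hr⟩, rfl⟩
    rcases Nat.lt_or_ge (t+1) s with h'|h'
    · exact h'
    · exfalso; apply h
      have : s = t+1 := le_antisymm h' hs
      rw [← this, hr]

lemma nextReq_lt_of_ne {t p : ℕ} (h : p ≠ r (t+1)) :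
    nextReq r t (r (t+1)) < nextReq r t p := by
  rw [nextReq_req]
  refine lt_of_le_of_ne (succ_le_nextReq r t p) fun heq => ?_
  -- attainment: the set must be nonempty and its min is t+1
  rcases Set.eq_empty_or_nonempty {s : ℕ | t < s ∧ r s = p} with hS | hS
  · rw [nextReq, hS] at heq
    simp only [Set.image_empty, sInf_empty] at heq
    exact ENat.coe_ne_top (t+1) heq
  · have hmem := Nat.sInf_mem hS
    have hval : nextReq r t p = ((sInf {s : ℕ | t < s ∧ r s = p} : ℕ) : ℕ∞) := by
      apply le_antisymm
      · exact sInf_le ⟨_, hmem, rfl⟩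
      · apply le_sInf
        rintro x ⟨s, hs, rfl⟩
        exact Nat.cast_le.mpr (Nat.sInf_le hs)
    rw [hval] at heq
    have h2 : t + 1 = sInf {s : ℕ | t < s ∧ r s = p} := by exact_mod_cast heq
    exact h (by rw [← hmem.2, ← h2])

end NextReq

section Key

variable (r : ℕ → ℕ)

lemma key_eq_of_ne {t p : ℕ} (h : p ≠ r (t+1)) : fifKey r (t+1) p = fifKey r t p := by
  unfold fifKey; rw [nextReq_eq_of_ne r h]

lemma key_lt_of_ne {t p : ℕ} (h : p ≠ r (t+1)) :
    fifKey r t (r (t+1)) < fifKey r t p := by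
  unfold fifKey
  rw [Prod.Lex.lt_iff]
  exact Or.inl (nextReq_lt_of_ne r h)

lemma key_req_le_key (t p : ℕ) : fifKey r t (r (t+1)) ≤ fifKey r t p := by
  rcases eq_or_ne p (r (t+1)) with rfl | h
  · exact le_refl _
  · exact le_of_lt (key_lt_of_ne r h)

lemma key_self_mono (t : ℕ) : fifKey r t (r (t+1)) ≤ fifKey r (t+1) (r (t+1)) := by
  have hle : nextReq r t (r (t+1)) ≤ nextReq r (t+1) (r (t+1)) := by
    rw [nextReq_req]
    calc (((t+1:ℕ)):ℕ∞) ≤ (((t+2:ℕ)):ℕ∞) := by exact_mod_cast Nat.le_succ _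
    _ ≤ _ := succ_le_nextReq r (t+1) _
  unfold fifKey
  rw [Prod.Lex.le_iff]
  rcases eq_or_lt_of_le hle with h | h
  · exact Or.inr ⟨h, le_refl _⟩
  · exact Or.inl h

lemma key_mono (t p : ℕ) : fifKey r t p ≤ fifKey r (t+1) p := by
  rcases eq_or_ne p (r (t+1)) with rfl | h
  · exact key_self_mono r t
  · rw [key_eq_of_ne r h]

end Key

section Victim

variable (r : ℕ → ℕ)

lemma victim_mem {t : ℕ} {C : Finset ℕ} (h : C.Nonempty) : victim r t C ∈ C := by
  unfold victim
  rw [dif_pos h]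
  exact (Classical.choose_spec (C.exists_max_image (fifKey r t) h)).1

lemma victim_max {t : ℕ} {C : Finset ℕ} (h : C.Nonempty) :
    ∀ p ∈ C, fifKey r t p ≤ fifKey r t (victim r t C) := by
  unfold victim
  rw [dif_pos h]
  exact (Classical.choose_spec (C.exists_max_image (fifKey r t) h)).2

lemma fifCache_card (C0 : Finset ℕ) (t : ℕ) : (fifCache r C0 t).card = C0.card := by
  induction t with
  | zero => rfl
  | succ t ih =>
    show (fifStep r t (fifCache r C0 t)).card = C0.card
    unfold fifStep
    split_ifs with h1 h2
    · exact ih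
    · exact ih
    · set C := fifCache r C0 t
      have hne : C.Nonempty := Finset.nonempty_of_ne_empty h2
      have hv : victim r (t+1) C ∈ C := victim_mem r hne
      rw [Finset.card_insert_of_notMem (fun hmem => h1 (Finset.mem_of_mem_erase hmem)),
        Finset.card_erase_of_mem hv, ← ih]
      have : 1 ≤ C.card := Finset.card_pos.mpr hne
      omega

end Victim
noncomputable def cnt (r : ℕ → ℕ) (t : ℕ) (A : Finset ℕ) (s : ℕ∞ ×ₗ ℕ) : ℕ :=
  (A.filter (fun p => s ≤ fifKey r t p)).card

noncomputable def pval (r : ℕ → ℕ) (C0 : Finset ℕ) (E : ℕ → Finset ℕ) (t : ℕ)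
    (s : ℕ∞ ×ₗ ℕ) : ℤ :=
  (cnt r t (fifCache r C0 t) s : ℤ) - cnt r t (E t) s

noncomputable def phi (r : ℕ → ℕ) (C0 : Finset ℕ) (E : ℕ → Finset ℕ) (t : ℕ) : ℤ :=
  sSup (Set.range (pval r C0 E t))

section Phi

variable (r : ℕ → ℕ) (C0 : Finset ℕ) (E : ℕ → Finset ℕ)

lemma cnt_le_card (t : ℕ) (A : Finset ℕ) (s : ℕ∞ ×ₗ ℕ) : cnt r t A s ≤ A.card :=
  Finset.card_le_card (Finset.filter_subset _ _)

lemma pval_le_card (t : ℕ) (s : ℕ∞ ×ₗ ℕ) : pval r C0 E t s ≤ (C0.card : ℤ) := by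
  have h1 : cnt r t (fifCache r C0 t) s ≤ C0.card :=
    (fifCache_card r C0 t) ▸ cnt_le_card r t _ s
  have h2 : (0:ℤ) ≤ (cnt r t (E t) s : ℤ) := Int.natCast_nonneg _
  simp only [pval]
  omega

lemma le_phi (t : ℕ) (s : ℕ∞ ×ₗ ℕ) : pval r C0 E t s ≤ phi r C0 E t :=
  le_csSup ⟨(C0.card : ℤ), by rintro x ⟨s', rfl⟩; exact pval_le_card r C0 E t s'⟩ ⟨s, rfl⟩

lemma phi_le {t : ℕ} {B : ℤ} (h : ∀ s, pval r C0 E t s ≤ B) : phi r C0 E t ≤ B :=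
  csSup_le (Set.range_nonempty _) (by rintro x ⟨s, rfl⟩; exact h s)

lemma bot_le_key (t p : ℕ) : toLex ((0 : ℕ∞), (0:ℕ)) ≤ fifKey r t p := by
  unfold fifKey
  rw [Prod.Lex.le_iff]
  left
  show (0 : ℕ∞) < nextReq r t p
  exact lt_of_lt_of_le (by exact_mod_cast Nat.succ_pos t) (succ_le_nextReq r t p)

lemma cnt_bot (t : ℕ) (A : Finset ℕ) : cnt r t A (toLex ((0 : ℕ∞), (0:ℕ))) = A.card := by
  unfold cnt
  rw [Finset.filter_true_of_mem (fun p _ => bot_le_key r t p)]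

lemma phi_zero (hE0 : E 0 = C0) : phi r C0 E 0 = 0 := by
  have h : pval r C0 E 0 = fun _ => 0 := by
    funext s
    show (cnt r 0 (fifCache r C0 0) s : ℤ) - cnt r 0 (E 0) s = 0
    rw [show fifCache r C0 0 = C0 from rfl, hE0, sub_self]
  unfold phi
  rw [h, Set.range_const]
  exact csSup_singleton 0

lemma phi_lb1 {k : ℕ} (hk : C0.card = k) (t : ℕ) :
    (k : ℤ) - (E t).card ≤ phi r C0 E t := by
  have h := le_phi r C0 E t (toLex ((0 : ℕ∞), (0:ℕ)))
  have h2 : pval r C0 E t (toLex ((0 : ℕ∞), (0:ℕ)))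
      = (k : ℤ) - (E t).card := by
    show (cnt r t (fifCache r C0 t) _ : ℤ) - cnt r t (E t) _ = _
    rw [cnt_bot, cnt_bot, fifCache_card, hk]
  omega

lemma phi_nonneg {k : ℕ} (hk : C0.card = k) (hEcard : ∀ u, (E u).card ≤ k) (t : ℕ) :
    0 ≤ phi r C0 E t := by
  have h := phi_lb1 r C0 E hk t
  have h2 := hEcard t
  omega

lemma phi_lb2 {k : ℕ} (hk : C0.card = k) (t : ℕ)
    (hρD : r (t+1) ∈ E t) (hρF : r (t+1) ∉ fifCache r C0 t) :
    (k : ℤ) - (E t).card + 1 ≤ phi r C0 E t := by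
  set s₀ : ℕ∞ ×ₗ ℕ := toLex ((((t+1:ℕ)) : ℕ∞), r (t+1) + 1) with hs₀
  have h1 : cnt r t (fifCache r C0 t) s₀ = (fifCache r C0 t).card := by
    unfold cnt
    rw [Finset.filter_true_of_mem]
    intro p hp
    have hne : p ≠ r (t+1) := fun h => hρF (h ▸ hp)
    have hlt := nextReq_lt_of_ne r hne
    rw [nextReq_req] at hlt
    rw [hs₀]
    unfold fifKey
    rw [Prod.Lex.le_iff]
    exact Or.inl hlt
  have h2 : cnt r t (E t) s₀ ≤ (E t).card - 1 := by
    have hsub : (E t).filter (fun p => s₀ ≤ fifKey r t p) ⊆ (E t).erase (r (t+1)) := by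
      intro p hp
      rw [Finset.mem_filter] at hp
      refine Finset.mem_erase.mpr ⟨?_, hp.1⟩
      rintro rfl
      have := hp.2
      rw [hs₀] at this
      unfold fifKey at this
      rw [nextReq_req, Prod.Lex.le_iff] at this
      rcases this with h | ⟨_, h⟩
      · exact lt_irrefl _ h
      · simp only [ofLex_toLex] at h; omega
    calc cnt r t (E t) s₀ ≤ ((E t).erase (r (t+1))).card := Finset.card_le_card hsub
      _ = (E t).card - 1 := Finset.card_erase_of_mem hρD
  have h3 := le_phi r C0 E t s₀
  have h4 : 1 ≤ (E t).card := Finset.card_pos.mpr ⟨_, hρD⟩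
  have h5 : pval r C0 E t s₀ = (cnt r t (fifCache r C0 t) s₀ : ℤ) - cnt r t (E t) s₀ := rfl
  rw [h5, h1, fifCache_card, hk] at h3
  omega

end Phi
section Step

variable (r : ℕ → ℕ) (C0 : Finset ℕ) (E : ℕ → Finset ℕ)

lemma phi_step {k : ℕ} (hk : C0.card = k) (hk0 : k ≠ 0)
    (hEcard : ∀ u, (E u).card ≤ k) (t : ℕ)
    (hserve : r (t+1) ∈ E (t+1)) (hmono : (E t).card ≤ (E (t+1)).card) :
    phi r C0 E (t+1) ≤ phi r C0 E t + ((E (t+1) \ E t).card : ℤ) -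
      (if r (t+1) ∉ fifCache r C0 t then 1 else 0) := by
  set ρ := r (t+1) with hρ
  set D := E t with hD
  set Dn := E (t+1) with hDn
  set F := fifCache r C0 t with hF
  -- e ≤ d
  have hedd : ((D \ Dn).card : ℤ) ≤ ((Dn \ D).card : ℤ) := by
    have h1 := Finset.card_sdiff_add_card D Dn
    have h2 := Finset.card_sdiff_add_card Dn D
    rw [Finset.union_comm] at h2
    omega
  -- lower bound on the count of Dn at time t+1
  have hBD : ∀ s : ℕ∞ ×ₗ ℕ, (cnt r t D s : ℤ) ≤ (cnt r (t+1) Dn s : ℤ)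
      + ((D \ Dn).card : ℤ) + (if s ≤ fifKey r t ρ then (1:ℤ) else 0)
      - (if s ≤ fifKey r (t+1) ρ then (1:ℤ) else 0) := by
    intro s
    set X := ((D ∩ Dn).erase ρ).filter (fun p => s ≤ fifKey r t p) with hX
    have h1 : cnt r t D s ≤ X.card + (D \ Dn).card + (if s ≤ fifKey r t ρ then 1 else 0) := by
      have hsub : D.filter (fun p => s ≤ fifKey r t p) \ {ρ} ⊆ X ∪ (D \ Dn) := by
        intro p hp
        rw [Finset.mem_sdiff, Finset.mem_filter, Finset.mem_singleton] at hp
        obtain ⟨⟨hpD, hps⟩, hne⟩ := hp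
        by_cases hpDn : p ∈ Dn
        · exact Finset.mem_union_left _ (Finset.mem_filter.mpr
            ⟨Finset.mem_erase.mpr ⟨hne, Finset.mem_inter.mpr ⟨hpD, hpDn⟩⟩, hps⟩)
        · exact Finset.mem_union_right _ (Finset.mem_sdiff.mpr ⟨hpD, hpDn⟩)
      by_cases hχ : s ≤ fifKey r t ρ
      · rw [if_pos hχ]
        have hsub2 : D.filter (fun p => s ≤ fifKey r t p) ⊆
            insert ρ (X ∪ (D \ Dn)) := by
          intro p hp
          rcases eq_or_ne p ρ with rfl | hne
          · exact Finset.mem_insert_self _ _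
          · exact Finset.mem_insert_of_mem (hsub (Finset.mem_sdiff.mpr
              ⟨hp, by simpa using hne⟩))
        calc cnt r t D s ≤ (insert ρ (X ∪ (D \ Dn))).card := Finset.card_le_card hsub2
          _ ≤ (X ∪ (D \ Dn)).card + 1 := Finset.card_insert_le _ _
          _ ≤ X.card + (D \ Dn).card + 1 := by
              have := Finset.card_union_le X (D \ Dn); omega
      · rw [if_neg hχ]
        have hsub2 : D.filter (fun p => s ≤ fifKey r t p) ⊆ X ∪ (D \ Dn) := by
          intro p hp
          refine hsub (Finset.mem_sdiff.mpr ⟨hp, ?_⟩)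
          rw [Finset.mem_singleton]
          rintro rfl
          exact hχ (Finset.mem_filter.mp hp).2
        calc cnt r t D s ≤ (X ∪ (D \ Dn)).card := Finset.card_le_card hsub2
          _ ≤ X.card + (D \ Dn).card := Finset.card_union_le _ _
          _ ≤ X.card + (D \ Dn).card + 0 := le_refl _
    have h2 : X.card + (if s ≤ fifKey r (t+1) ρ then 1 else 0) ≤ cnt r (t+1) Dn s := by
      have hXsub : X ⊆ Dn.filter (fun p => s ≤ fifKey r (t+1) p) := by
        intro p hpX
        have h3 := Finset.mem_filter.mp hpX
        have hne : p ≠ ρ := (Finset.mem_erase.mp h3.1).1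
        refine Finset.mem_filter.mpr
          ⟨(Finset.mem_inter.mp (Finset.mem_of_mem_erase h3.1)).2, ?_⟩
        rw [key_eq_of_ne r hne]
        exact h3.2
      by_cases hχ' : s ≤ fifKey r (t+1) ρ
      · rw [if_pos hχ']
        have hρX : ρ ∉ X := fun h => (Finset.mem_erase.mp (Finset.mem_filter.mp h).1).1 rfl
        have hsub : insert ρ X ⊆ Dn.filter (fun p => s ≤ fifKey r (t+1) p) := by
          intro p hp
          rcases Finset.mem_insert.mp hp with rfl | hpX
          · exact Finset.mem_filter.mpr ⟨hserve, hχ'⟩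
          · exact hXsub hpX
        calc X.card + 1 = (insert ρ X).card := (Finset.card_insert_of_notMem hρX).symm
          _ ≤ _ := Finset.card_le_card hsub
      · rw [if_neg hχ']
        have h5 : X.card ≤ cnt r (t+1) Dn s := Finset.card_le_card hXsub
        omega
    by_cases hχ : s ≤ fifKey r t ρ
    · rw [if_pos hχ] at h1 ⊢
      by_cases hχ' : s ≤ fifKey r (t+1) ρ
      · rw [if_pos hχ'] at h2 ⊢; omega
      · rw [if_neg hχ'] at h2 ⊢; omega
    · rw [if_neg hχ] at h1 ⊢
      by_cases hχ' : s ≤ fifKey r (t+1) ρ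
      · rw [if_pos hχ'] at h2 ⊢; omega
      · rw [if_neg hχ'] at h2 ⊢; omega
  by_cases hρF : ρ ∈ F
  · -- hit case
    rw [if_neg (not_not_intro hρF)]
    have hF'eq : fifCache r C0 (t+1) = F := by
      show fifStep r t F = F
      unfold fifStep
      rw [if_pos hρF]
    have hBF : ∀ s : ℕ∞ ×ₗ ℕ, (cnt r (t+1) F s : ℤ) ≤ (cnt r t F s : ℤ)
        - (if s ≤ fifKey r t ρ then (1:ℤ) else 0)
        + (if s ≤ fifKey r (t+1) ρ then (1:ℤ) else 0) := by
      intro s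
      by_cases hχ' : s ≤ fifKey r (t+1) ρ
      · rw [if_pos hχ']
        have hsub : F.filter (fun p => s ≤ fifKey r (t+1) p) ⊆
            insert ρ ((F.filter (fun p => s ≤ fifKey r t p)).erase ρ) := by
          intro p hp
          rw [Finset.mem_filter] at hp
          rcases eq_or_ne p ρ with rfl | hne
          · exact Finset.mem_insert_self _ _
          · refine Finset.mem_insert_of_mem (Finset.mem_erase.mpr ⟨hne, ?_⟩)
            rw [Finset.mem_filter]
            exact ⟨hp.1, by rw [← key_eq_of_ne r hne]; exact hp.2⟩
        have hc1 : cnt r (t+1) F s ≤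
            ((F.filter (fun p => s ≤ fifKey r t p)).erase ρ).card + 1 :=
          le_trans (Finset.card_le_card hsub) (Finset.card_insert_le _ _)
        by_cases hχ : s ≤ fifKey r t ρ
        · rw [if_pos hχ]
          have hρf : ρ ∈ F.filter (fun p => s ≤ fifKey r t p) :=
            Finset.mem_filter.mpr ⟨hρF, hχ⟩
          have hc2 := Finset.card_erase_of_mem hρf
          have hc3 : 1 ≤ cnt r t F s := Finset.card_pos.mpr ⟨ρ, hρf⟩
          have hc4 : ((F.filter (fun p => s ≤ fifKey r t p)).erase ρ).card
              = cnt r t F s - 1 := hc2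
          omega
        · rw [if_neg hχ]
          have hc2 : ((F.filter (fun p => s ≤ fifKey r t p)).erase ρ).card
              ≤ cnt r t F s := Finset.card_le_card (Finset.erase_subset _ _)
          omega
      · rw [if_neg hχ']
        have hχ : ¬ s ≤ fifKey r t ρ := fun h => hχ' (le_trans h (key_self_mono r t))
        rw [if_neg hχ]
        have hsub : F.filter (fun p => s ≤ fifKey r (t+1) p) ⊆
            F.filter (fun p => s ≤ fifKey r t p) := by
          intro p hp
          rw [Finset.mem_filter] at hp ⊢
          rcases eq_or_ne p ρ with rfl | hne
          · exact absurd hp.2 hχ'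
          · exact ⟨hp.1, by rw [← key_eq_of_ne r hne]; exact hp.2⟩
        have h5 : cnt r (t+1) F s ≤ cnt r t F s := Finset.card_le_card hsub
        omega
    apply phi_le
    intro s
    have hp := le_phi r C0 E t s
    have hpv : pval r C0 E (t+1) s = (cnt r (t+1) F s : ℤ) - cnt r (t+1) Dn s := by
      show (cnt r (t+1) (fifCache r C0 (t+1)) s : ℤ) - _ = _
      rw [hF'eq]
    have hpv2 : pval r C0 E t s = (cnt r t F s : ℤ) - cnt r t D s := rfl
    rw [hpv]
    rw [hpv2] at hp
    have h1 := hBD s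
    have h2 := hBF s
    linarith
  · -- fault case
    rw [if_pos hρF]
    have hFcard : F.card = k := by rw [hF, fifCache_card, hk]
    have hFnonempty : F.Nonempty := Finset.card_pos.mp (by omega)
    have hFne : F ≠ ∅ := Finset.nonempty_iff_ne_empty.mp hFnonempty
    set v := victim r (t+1) F with hv
    have hvF : v ∈ F := victim_mem r hFnonempty
    have hvρ : v ≠ ρ := fun h => hρF (h ▸ hvF)
    have hF'eq : fifCache r C0 (t+1) = insert ρ (F.erase v) := by
      show fifStep r t F = _
      unfold fifStep
      rw [if_neg hρF, if_neg hFne]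
    have hvmax : ∀ p ∈ F, fifKey r t p ≤ fifKey r t v := by
      intro p hp
      have hne : p ≠ ρ := fun h => hρF (h ▸ hp)
      have h := victim_max r (t := t+1) hFnonempty p hp
      rwa [key_eq_of_ne r hne, key_eq_of_ne r hvρ] at h
    apply phi_le
    intro s
    have hpv : pval r C0 E (t+1) s
        = (cnt r (t+1) (insert ρ (F.erase v)) s : ℤ) - cnt r (t+1) Dn s := by
      show (cnt r (t+1) (fifCache r C0 (t+1)) s : ℤ) - _ = _
      rw [hF'eq]
    rw [hpv]
    -- key facts about d = 0 case
    have hd0 : (Dn \ D).card = 0 → ρ ∈ D := by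
      intro h
      have : Dn ⊆ D := by
        intro x hx
        by_contra hxD
        have : x ∈ Dn \ D := Finset.mem_sdiff.mpr ⟨hx, hxD⟩
        have := Finset.card_pos.mpr ⟨x, this⟩
        omega
      exact this hserve
    by_cases hχ : s ≤ fifKey r t ρ
    · -- region A: all keys pass
      have hDnfull : cnt r (t+1) Dn s = Dn.card := by
        unfold cnt
        rw [Finset.filter_true_of_mem]
        intro p _
        exact le_trans (le_trans hχ (key_req_le_key r t p)) (key_mono r t p)
      have hFle : (cnt r (t+1) (insert ρ (F.erase v)) s : ℤ) ≤ k := by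
        have h1 : cnt r (t+1) (insert ρ (F.erase v)) s ≤ (insert ρ (F.erase v)).card :=
          cnt_le_card r _ _ _
        have h2 : (insert ρ (F.erase v)).card ≤ (F.erase v).card + 1 :=
          Finset.card_insert_le _ _
        have h3 : (F.erase v).card = F.card - 1 := Finset.card_erase_of_mem hvF
        have h4 : 1 ≤ F.card := Finset.card_pos.mpr hFnonempty
        have : cnt r (t+1) (insert ρ (F.erase v)) s ≤ k := by omega
        exact_mod_cast this
      rw [hDnfull]
      rcases Nat.eq_zero_or_pos (Dn \ D).card with hd | hd
      · have hρD := hd0 hd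
        have hlb := phi_lb2 r C0 E hk t hρD hρF
        have hcard := hmono
        have : ((Dn \ D).card : ℤ) = 0 := by exact_mod_cast hd
        rw [← hD] at hlb
        omega
      · have hlb := phi_lb1 r C0 E hk t
        rw [← hD] at hlb
        have hcard := hmono
        have : (1:ℤ) ≤ ((Dn \ D).card : ℤ) := by exact_mod_cast hd
        omega
    · by_cases hsv : s ≤ fifKey r t v
      · -- region B1
        have hBF1 : (cnt r (t+1) (insert ρ (F.erase v)) s : ℤ) ≤ (cnt r t F s : ℤ) - 1
            + (if s ≤ fifKey r (t+1) ρ then (1:ℤ) else 0) := by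
          unfold cnt
          have hvfilter : v ∈ F.filter (fun p => s ≤ fifKey r t p) :=
            Finset.mem_filter.mpr ⟨hvF, hsv⟩
          have hc2 : ((F.filter (fun p => s ≤ fifKey r t p)).erase v).card
              = (F.filter (fun p => s ≤ fifKey r t p)).card - 1 :=
            Finset.card_erase_of_mem hvfilter
          have hc3 : 1 ≤ (F.filter (fun p => s ≤ fifKey r t p)).card :=
            Finset.card_pos.mpr ⟨v, hvfilter⟩
          have hsub0 : ∀ p ∈ (F.erase v).filter (fun q => s ≤ fifKey r (t+1) q),
              p ∈ (F.filter (fun q => s ≤ fifKey r t q)).erase v := by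
            intro p hp
            rw [Finset.mem_filter] at hp
            obtain ⟨hpe, hps⟩ := hp
            have hpF := Finset.mem_of_mem_erase hpe
            have hne : p ≠ ρ := fun h => hρF (h ▸ hpF)
            refine Finset.mem_erase.mpr ⟨(Finset.mem_erase.mp hpe).1, ?_⟩
            rw [Finset.mem_filter]
            exact ⟨hpF, by rw [← key_eq_of_ne r hne]; exact hps⟩
          by_cases hχ' : s ≤ fifKey r (t+1) ρ
          · rw [if_pos hχ']
            have hsub : (insert ρ (F.erase v)).filter (fun p => s ≤ fifKey r (t+1) p) ⊆
                insert ρ ((F.filter (fun q => s ≤ fifKey r t q)).erase v) := by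
              intro p hp
              rw [Finset.mem_filter, Finset.mem_insert] at hp
              rcases hp.1 with rfl | hpe
              · exact Finset.mem_insert_self _ _
              · exact Finset.mem_insert_of_mem
                  (hsub0 p (Finset.mem_filter.mpr ⟨hpe, hp.2⟩))
            have := le_trans (Finset.card_le_card hsub) (Finset.card_insert_le _ _)
            push_cast
            omega
          · rw [if_neg hχ']
            have hsub : (insert ρ (F.erase v)).filter (fun p => s ≤ fifKey r (t+1) p) ⊆
                (F.filter (fun q => s ≤ fifKey r t q)).erase v := by
              intro p hp
              rw [Finset.mem_filter, Finset.mem_insert] at hp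
              rcases hp.1 with rfl | hpe
              · exact absurd hp.2 hχ'
              · exact hsub0 p (Finset.mem_filter.mpr ⟨hpe, hp.2⟩)
            have := Finset.card_le_card hsub
            push_cast
            omega
        have h1 := hBD s
        rw [if_neg hχ] at h1
        have hp := le_phi r C0 E t s
        have hpv2 : pval r C0 E t s = (cnt r t F s : ℤ) - cnt r t D s := rfl
        rw [hpv2] at hp
        linarith
      · -- region B2: s above the victim's key
        have hvs : fifKey r t v < s := not_le.mp hsv
        have hFtop : (cnt r (t+1) (insert ρ (F.erase v)) s : ℤ)
            ≤ (if s ≤ fifKey r (t+1) ρ then (1:ℤ) else 0) := by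
          have hsub : (insert ρ (F.erase v)).filter (fun p => s ≤ fifKey r (t+1) p) ⊆
              (if s ≤ fifKey r (t+1) ρ then {ρ} else ∅) := by
            intro p hp
            rw [Finset.mem_filter, Finset.mem_insert] at hp
            rcases hp.1 with rfl | hpe
            · rw [if_pos hp.2]; exact Finset.mem_singleton_self _
            · exfalso
              have hpF := Finset.mem_of_mem_erase hpe
              have hne : p ≠ ρ := fun h => hρF (h ▸ hpF)
              have := hp.2
              rw [key_eq_of_ne r hne] at this
              exact absurd (le_trans this (hvmax p hpF)) hsv
          have := Finset.card_le_card hsub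
          split_ifs at this ⊢ with h
          · simp only [Finset.card_singleton] at this
            exact_mod_cast this
          · simp only [Finset.card_empty, Nat.le_zero] at this
            unfold cnt
            omega
        have hDtop : (if s ≤ fifKey r (t+1) ρ then (1:ℤ) else 0)
            ≤ (cnt r (t+1) Dn s : ℤ) := by
          split_ifs with h
          · have : ρ ∈ Dn.filter (fun p => s ≤ fifKey r (t+1) p) :=
              Finset.mem_filter.mpr ⟨hserve, h⟩
            have := Finset.card_pos.mpr ⟨ρ, this⟩
            exact_mod_cast this
          · exact Int.natCast_nonneg _
        rcases Nat.eq_zero_or_pos (Dn \ D).card with hd | hd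
        · have hρD := hd0 hd
          have hlb := phi_lb2 r C0 E hk t hρD hρF
          rw [← hD] at hlb
          have hcard := hEcard t
          rw [← hD] at hcard
          have : ((Dn \ D).card : ℤ) = 0 := by exact_mod_cast hd
          have hck : ((D.card : ℤ)) ≤ k := by exact_mod_cast hcard
          linarith
        · have hlb := phi_lb1 r C0 E hk t
          rw [← hD] at hlb
          have hcard := hEcard t
          rw [← hD] at hcard
          have hck : ((D.card : ℤ)) ≤ k := by exact_mod_cast hcard
          have : (1:ℤ) ≤ ((Dn \ D).card : ℤ) := by exact_mod_cast hd
          linarith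
end Step
section Assemble

lemma fif_le_of_good (r : ℕ → ℕ) (k : ℕ) (C0 : Finset ℕ) (hk : C0.card = k) (hk0 : k ≠ 0)
    (E : ℕ → Finset ℕ) (hE0 : E 0 = C0) (hEcard : ∀ u, (E u).card ≤ k)
    (hEserve : ∀ u, r (u+1) ∈ E (u+1)) (hEmono : ∀ u, (E u).card ≤ (E (u+1)).card) (T : ℕ) :
    ((Finset.range T).filter (fun t => r (t+1) ∉ fifCache r C0 t)).card ≤
      ∑ t ∈ Finset.range T, ((E (t+1)) \ (E t)).card := by
  have key : ∀ T : ℕ,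
      (((Finset.range T).filter (fun t => r (t+1) ∉ fifCache r C0 t)).card : ℤ)
        + phi r C0 E T ≤ ∑ t ∈ Finset.range T, (((E (t+1)) \ (E t)).card : ℤ) := by
    intro T
    induction T with
    | zero => simp [phi_zero r C0 E hE0]
    | succ T ih =>
      have hstep := phi_step r C0 E hk hk0 hEcard T (hEserve T) (hEmono T)
      rw [Finset.range_add_one, Finset.filter_insert,
        Finset.sum_insert Finset.notMem_range_self]
      by_cases h : r (T+1) ∉ fifCache r C0 T
      · rw [if_pos h]
        rw [if_pos h] at hstep
        rw [Finset.card_insert_of_notMem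
          (fun hc => Finset.notMem_range_self (Finset.mem_filter.mp hc).1)]
        push_cast
        linarith
      · rw [if_neg h]
        rw [if_neg h] at hstep
        linarith
  have hT := key T
  have hnn := phi_nonneg r C0 E hk hEcard T
  have h2 : (((Finset.range T).filter (fun t => r (t+1) ∉ fifCache r C0 t)).card : ℤ)
      ≤ ∑ t ∈ Finset.range T, (((E (t+1)) \ (E t)).card : ℤ) := by linarith
  exact_mod_cast h2

noncomputable def pad (k : ℕ) (D : ℕ → Finset ℕ) : ℕ → Finset ℕ
  | 0 => D 0
  | t+1 =>
    D (t+1) ∪ Classical.choose (Finset.exists_subset_card_eq (s := pad k D t \ D (t+1))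
      (n := min k ((pad k D t ∪ D (t+1)).card) - (D (t+1)).card)
      (by
        have h := Finset.card_sdiff_add_card (pad k D t) (D (t+1))
        omega))

lemma pad_succ (k : ℕ) (D : ℕ → Finset ℕ) (t : ℕ) :
    ∃ S : Finset ℕ, S ⊆ pad k D t \ D (t+1) ∧
      S.card = min k ((pad k D t ∪ D (t+1)).card) - (D (t+1)).card ∧
      pad k D (t+1) = D (t+1) ∪ S := by
  have h := Classical.choose_spec (Finset.exists_subset_card_eq (s := pad k D t \ D (t+1))
      (n := min k ((pad k D t ∪ D (t+1)).card) - (D (t+1)).card)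
      (by
        have h := Finset.card_sdiff_add_card (pad k D t) (D (t+1))
        omega))
  exact ⟨_, h.1, h.2, rfl⟩

lemma padD_subset (k : ℕ) (D : ℕ → Finset ℕ) (t : ℕ) : D t ⊆ pad k D t := by
  cases t with
  | zero => exact subset_refl _
  | succ t => exact Finset.subset_union_left

lemma pad_card (k : ℕ) (D : ℕ → Finset ℕ) (hDcard : ∀ u, (D u).card ≤ k) (t : ℕ) :
    (pad k D (t+1)).card = min k ((pad k D t ∪ D (t+1)).card) := by
  obtain ⟨S, hsub, hcard, heq⟩ := pad_succ k D t
  have hdisj : Disjoint (D (t+1)) S := by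
    rw [Finset.disjoint_right]
    intro a haS haD
    exact (Finset.mem_sdiff.mp (hsub haS)).2 haD
  rw [heq, Finset.card_union_of_disjoint hdisj, hcard]
  have h1 : (D (t+1)).card ≤ k := hDcard _
  have h2 : (D (t+1)).card ≤ (pad k D t ∪ D (t+1)).card :=
    Finset.card_le_card Finset.subset_union_right
  omega

lemma pad_card_le (k : ℕ) (D : ℕ → Finset ℕ) (hDcard : ∀ u, (D u).card ≤ k) (t : ℕ) :
    (pad k D t).card ≤ k := by
  induction t with
  | zero => exact hDcard 0
  | succ t _ => rw [pad_card k D hDcard t]; exact min_le_left _ _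

lemma pad_mono (k : ℕ) (D : ℕ → Finset ℕ) (hDcard : ∀ u, (D u).card ≤ k) (t : ℕ) :
    (pad k D t).card ≤ (pad k D (t+1)).card := by
  rw [pad_card k D hDcard t]
  exact le_min (pad_card_le k D hDcard t)
    (Finset.card_le_card Finset.subset_union_left)

lemma pad_load (k : ℕ) (D : ℕ → Finset ℕ) (t : ℕ) :
    (pad k D (t+1) \ pad k D t).card ≤ (D (t+1) \ D t).card := by
  apply Finset.card_le_card
  obtain ⟨S, hsub, _, heq⟩ := pad_succ k D t
  intro x hx
  rw [Finset.mem_sdiff] at hx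
  obtain ⟨hx1, hx2⟩ := hx
  rw [heq, Finset.mem_union] at hx1
  rcases hx1 with hx1 | hx1
  · exact Finset.mem_sdiff.mpr ⟨hx1, fun h => hx2 (padD_subset k D t h)⟩
  · exact absurd (Finset.mem_sdiff.mp (hsub hx1)).1 hx2

end Assemble


/-- **Optimality of Belady's Farthest-in-Future algorithm for unweighted paging.**
For any request sequence `r` and any offline algorithm `D` with the same cache size `k`
and the same starting configuration, which always holds the requested page after serving
it and never exceeds the cache size, the number of page faults of FiF over any horizon `T`
is at most the number of pages loaded by the offline algorithm. -/
theorem fif_one_competitive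
    (r : ℕ → ℕ) (k : ℕ) (C0 : Finset ℕ) (hk : C0.card = k)
    (D : ℕ → Finset ℕ) (hD0 : D 0 = C0)
    (hDcard : ∀ t, (D t).card ≤ k)
    (hDserve : ∀ t, r (t+1) ∈ D (t+1)) (T : ℕ) :
    ((Finset.range T).filter (fun t => r (t+1) ∉ fifCache r C0 t)).card ≤
      ∑ t ∈ Finset.range T, ((D (t+1)) \ (D t)).card := by
  rcases Nat.eq_zero_or_pos k with hk0 | hk0
  · -- degenerate case k = 0
    cases T with
    | zero => simp
    | succ T =>
      exfalso
      have h1 : (D 1).card = 0 := Nat.le_zero.mp (hk0 ▸ hDcard 1)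
      have h2 : D 1 = ∅ := Finset.card_eq_zero.mp h1
      have := hDserve 0
      rw [h2] at this
      exact absurd this (Finset.notMem_empty _)
  · have hE0 : pad k D 0 = C0 := hD0
    have hEcard := pad_card_le k D hDcard
    have hEserve : ∀ u, r (u+1) ∈ pad k D (u+1) := fun u => padD_subset k D (u+1) (hDserve u)
    have hEmono := pad_mono k D hDcard
    calc ((Finset.range T).filter (fun t => r (t+1) ∉ fifCache r C0 t)).card
        ≤ ∑ t ∈ Finset.range T, ((pad k D (t+1)) \ (pad k D t)).card :=
          fif_le_of_good r k C0 hk (Nat.pos_iff_ne_zero.mp hk0) (pad k D) hE0 hEcard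
            hEserve hEmono T
      _ ≤ ∑ t ∈ Finset.range T, ((D (t+1)) \ (D t)).card :=
          Finset.sum_le_sum fun t _ => pad_load k D t
end

section
/- In the setting of Belady's potential analysis, at every step: (a) when the offline algorithm evicts a page, $\Phi$ increases by at most $1$; (b) when FiF has a page fault and evicts its farthest-in-future page, $\Phi$ decreases by exactly $1$; (c) when the requested page is reinserted into the next-request ordering, $\Phi$ is unchanged. Consequently $\mathrm{Bel}'(t) + \Phi'(t) \leq \mathrm{Off}'(t)$ at each time step $t$. -/
/-- Rank of page `p` in the universe `U` with respect to next-request time after time `t`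
(rank `1` = the page requested next; ties broken by the fixed rule). -/
noncomputable def rnk (r : ℕ → ℕ) (U : Finset ℕ) (t p : ℕ) : ℕ :=
  (U.filter (fun q => fifKey r t q ≤ fifKey r t p)).card

/-- `nCount r U t C s` = number of pages of the cache `C` whose rank at time `t` is `≥ s`. -/
noncomputable def nCount (r : ℕ → ℕ) (U : Finset ℕ) (t : ℕ) (C : Finset ℕ) (s : ℕ) : ℕ :=
  (C.filter (fun p => s ≤ rnk r U t p)).card

/-- Belady's potential `Φ(t) = max_s (n(s,t) - n*(s,t))`. -/
noncomputable def beladyPot (r : ℕ → ℕ) (U : Finset ℕ) (t : ℕ) (C D : Finset ℕ) : ℤ :=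
  (Finset.range (U.card + 1)).sup' Finset.nonempty_range_add_one
    (fun s => (nCount r U t C s : ℤ) - (nCount r U t D s : ℤ))

lemma bpa_nextReq_self (r : ℕ → ℕ) (t : ℕ) : nextReq r t (r (t+1)) = ((t+1 : ℕ) : ℕ∞) := by
  apply le_antisymm
  · exact sInf_le ⟨t+1, ⟨Nat.lt_succ_self t, rfl⟩, rfl⟩
  · apply le_sInf
    rintro x ⟨s, ⟨hs, _⟩, rfl⟩
    show ((t+1:ℕ):ℕ∞) ≤ (s:ℕ∞)
    exact_mod_cast hs

lemma bpa_nextReq_gt (r : ℕ → ℕ) (t q : ℕ) (hq : q ≠ r (t+1)) :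
    ((t+1 : ℕ) : ℕ∞) < nextReq r t q := by
  have h2 : ((t+2 : ℕ) : ℕ∞) ≤ nextReq r t q := by
    apply le_sInf
    rintro x ⟨s, ⟨hs, hrs⟩, rfl⟩
    have : s ≠ t+1 := fun h => hq (h ▸ hrs.symm)
    show ((t+2:ℕ):ℕ∞) ≤ (s:ℕ∞)
    exact_mod_cast (by omega : t+2 ≤ s)
  exact lt_of_lt_of_le (by exact_mod_cast Nat.lt_succ_self (t+1)) h2

lemma bpa_nextReq_shift (r : ℕ → ℕ) (t q : ℕ) (hq : q ≠ r (t+1)) :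
    nextReq r (t+1) q = nextReq r t q := by
  have hset : {s : ℕ | t+1 < s ∧ r s = q} = {s : ℕ | t < s ∧ r s = q} := by
    ext s
    simp only [Set.mem_setOf_eq]
    constructor
    · rintro ⟨h1, h2⟩; exact ⟨by omega, h2⟩
    · rintro ⟨h1, h2⟩
      have : s ≠ t+1 := fun h => hq (h ▸ h2.symm)
      exact ⟨by omega, h2⟩
  unfold nextReq
  rw [hset]

lemma bpa_key_min (r : ℕ → ℕ) (t q : ℕ) (hq : q ≠ r (t+1)) :
    fifKey r t (r (t+1)) < fifKey r t q := by
  unfold fifKey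
  rw [Prod.Lex.lt_iff]
  left
  show nextReq r t (r (t+1)) < nextReq r t q
  rw [bpa_nextReq_self]
  exact bpa_nextReq_gt r t q hq

lemma bpa_key_shift (r : ℕ → ℕ) (t q : ℕ) (hq : q ≠ r (t+1)) :
    fifKey r (t+1) q = fifKey r t q := by
  unfold fifKey
  rw [bpa_nextReq_shift r t q hq]

lemma bpa_key_ne (r : ℕ → ℕ) (t t' p q : ℕ) (h : p ≠ q) :
    fifKey r t p ≠ fifKey r t' q := by
  intro he
  exact h (congrArg (fun x => (ofLex x).2) he)


lemma bpa_rnk_le_card (r : ℕ → ℕ) (U : Finset ℕ) (t p : ℕ) : rnk r U t p ≤ U.card :=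
  Finset.card_filter_le _ _

lemma bpa_one_le_rnk (r : ℕ → ℕ) (U : Finset ℕ) (t : ℕ) {p : ℕ} (hp : p ∈ U) :
    1 ≤ rnk r U t p := by
  rw [Nat.succ_le_iff, rnk, Finset.card_pos]
  exact ⟨p, Finset.mem_filter.mpr ⟨hp, le_refl _⟩⟩

lemma bpa_rnk_mono (r : ℕ → ℕ) (U : Finset ℕ) (t : ℕ) {p q : ℕ}
    (h : fifKey r t p ≤ fifKey r t q) : rnk r U t p ≤ rnk r U t q := by
  apply Finset.card_le_card
  intro x hx
  rw [Finset.mem_filter] at hx ⊢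
  exact ⟨hx.1, le_trans hx.2 h⟩

lemma bpa_rnk_req (r : ℕ → ℕ) (U : Finset ℕ) (t : ℕ) (hp : r (t+1) ∈ U) :
    rnk r U t (r (t+1)) = 1 := by
  rw [rnk]
  have : U.filter (fun q => fifKey r t q ≤ fifKey r t (r (t+1))) = {r (t+1)} := by
    apply Finset.Subset.antisymm
    · intro q hq
      rw [Finset.mem_filter] at hq
      rw [Finset.mem_singleton]
      by_contra hne
      exact absurd hq.2 (not_le.mpr (bpa_key_min r t q hne))
    · intro q hq
      rw [Finset.mem_singleton] at hq
      subst hq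
      exact Finset.mem_filter.mpr ⟨hp, le_refl _⟩
  rw [this, Finset.card_singleton]

lemma bpa_two_le_rnk (r : ℕ → ℕ) (U : Finset ℕ) (t : ℕ) {q : ℕ} (hq : q ∈ U)
    (hne : q ≠ r (t+1)) (hp : r (t+1) ∈ U) : 2 ≤ rnk r U t q := by
  have hsub : insert (r (t+1)) {q} ⊆ U.filter (fun q' => fifKey r t q' ≤ fifKey r t q) := by
    intro x hx
    rcases Finset.mem_insert.mp hx with h | h
    · subst h; exact Finset.mem_filter.mpr ⟨hp, le_of_lt (bpa_key_min r t q hne)⟩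
    · rw [Finset.mem_singleton] at h; subst h
      exact Finset.mem_filter.mpr ⟨hq, le_refl _⟩
  have := Finset.card_le_card hsub
  rwa [Finset.card_insert_of_notMem (by simpa using fun h => hne h.symm),
    Finset.card_singleton] at this


lemma bpa_rnk_shift (r : ℕ → ℕ) (U : Finset ℕ) (t : ℕ) (hU : r (t+1) ∈ U)
    {q : ℕ} (hq : q ∈ U) (hne : q ≠ r (t+1)) :
    rnk r U (t+1) q =
      if rnk r U t q ≤ rnk r U (t+1) (r (t+1)) then rnk r U t q - 1 else rnk r U t q := by
  set p := r (t+1) with hpdef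
  set A := (U.erase p).filter (fun q' => fifKey r t q' ≤ fifKey r t q) with hA
  set B := (U.erase p).filter (fun q' => fifKey r t q' ≤ fifKey r (t+1) p) with hB
  have hUins : U = insert p (U.erase p) := (Finset.insert_erase hU).symm
  have hpnotmem : ∀ (P : ℕ → Prop) [DecidablePred P], p ∉ (U.erase p).filter P :=
    fun P _ h => (Finset.mem_erase.mp (Finset.mem_filter.mp h).1).1 rfl
  -- h1 : rnk at t of q
  have h1 : rnk r U t q = A.card + 1 := by
    rw [rnk]
    conv_lhs => rw [hUins]
    rw [Finset.filter_insert, if_pos (le_of_lt (bpa_key_min r t q hne))]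
    rw [Finset.card_insert_of_notMem (hpnotmem _)]
  -- h3 : rho
  have h3 : rnk r U (t+1) p = B.card + 1 := by
    rw [rnk]
    conv_lhs => rw [hUins]
    rw [Finset.filter_insert, if_pos (le_refl _)]
    rw [Finset.card_insert_of_notMem (hpnotmem _)]
    congr 1
    rw [hB]
    congr 1
    apply Finset.filter_congr
    intro x hx
    rw [bpa_key_shift r t x (Finset.mem_erase.mp hx).1]
  -- h2 : rnk at t+1 of q
  have h2 : rnk r U (t+1) q =
      A.card + (if fifKey r (t+1) p ≤ fifKey r t q then 1 else 0) := by
    rw [rnk]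
    conv_lhs => rw [hUins]
    have hfq : fifKey r (t+1) q = fifKey r t q := bpa_key_shift r t q hne
    have hfe : (U.erase p).filter (fun q' => fifKey r (t+1) q' ≤ fifKey r (t+1) q) = A := by
      apply Finset.filter_congr
      intro x hx
      rw [bpa_key_shift r t x (Finset.mem_erase.mp hx).1, hfq]
    rw [Finset.filter_insert, hfe]
    rw [hfq]
    split_ifs with h
    · rw [Finset.card_insert_of_notMem (by rw [hA] at *; exact hpnotmem _)]
    · rfl
  -- the key iff
  have hiff : fifKey r (t+1) p ≤ fifKey r t q ↔ B.card + 1 ≤ A.card := by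
    constructor
    · intro h
      have hlt : fifKey r (t+1) p < fifKey r t q :=
        lt_of_le_of_ne h (bpa_key_ne r (t+1) t p q (fun he => hne he.symm))
      have hsub : insert q B ⊆ A := by
        intro x hx
        rcases Finset.mem_insert.mp hx with hxq | hxB
        · subst hxq
          exact Finset.mem_filter.mpr ⟨Finset.mem_erase.mpr ⟨hne, hq⟩, le_refl _⟩
        · rw [hB, Finset.mem_filter] at hxB
          exact Finset.mem_filter.mpr ⟨hxB.1, le_trans hxB.2 h⟩
      have hqB : q ∉ B := by
        intro hqB
        rw [hB, Finset.mem_filter] at hqB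
        exact absurd hqB.2 (not_le.mpr hlt)
      calc B.card + 1 = (insert q B).card := (Finset.card_insert_of_notMem hqB).symm
        _ ≤ A.card := Finset.card_le_card hsub
    · intro h
      by_contra hnle
      have hlt : fifKey r t q ≤ fifKey r (t+1) p := le_of_not_ge hnle
      have hsub : A ⊆ B := by
        intro x hx
        rw [hA, Finset.mem_filter] at hx
        exact Finset.mem_filter.mpr ⟨hx.1, le_trans hx.2 hlt⟩
      have := Finset.card_le_card hsub
      omega
  rw [h1, h2, h3]
  by_cases h : fifKey r (t+1) p ≤ fifKey r t q
  · rw [if_pos h]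
    have := hiff.mp h
    rw [if_neg (by omega)]
  · rw [if_neg h]
    have : ¬ (B.card + 1 ≤ A.card) := fun hc => h (hiff.mpr hc)
    rw [if_pos (by omega)]
    omega


lemma bpa_nCount_sub (r : ℕ → ℕ) (U : Finset ℕ) (t : ℕ) (X Y : Finset ℕ) (s : ℕ) :
    nCount r U t X s ≤ nCount r U t Y s + (X \ Y).card := by
  have hsub : X.filter (fun p => s ≤ rnk r U t p) ⊆
      Y.filter (fun p => s ≤ rnk r U t p) ∪ (X \ Y) := by
    intro x hx
    rw [Finset.mem_filter] at hx
    by_cases hy : x ∈ Y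
    · exact Finset.mem_union_left _ (Finset.mem_filter.mpr ⟨hy, hx.2⟩)
    · exact Finset.mem_union_right _ (Finset.mem_sdiff.mpr ⟨hx.1, hy⟩)
  calc nCount r U t X s ≤ _ := Finset.card_le_card hsub
    _ ≤ _ := Finset.card_union_le _ _

lemma bpa_nCount_full (r : ℕ → ℕ) (U : Finset ℕ) (t : ℕ) {X : Finset ℕ} {s : ℕ}
    (h : ∀ q ∈ X, s ≤ rnk r U t q) : nCount r U t X s = X.card := by
  rw [nCount, Finset.filter_true_of_mem h]

lemma bpa_nCount_le_one (r : ℕ → ℕ) (U : Finset ℕ) (t : ℕ) {X : Finset ℕ} {s : ℕ}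
    (hs : s ≤ 1) (hX : X ⊆ U) : nCount r U t X s = X.card :=
  bpa_nCount_full r U t fun q hq => le_trans hs (bpa_one_le_rnk r U t (hX hq))

lemma bpa_nCount_zero_of (r : ℕ → ℕ) (U : Finset ℕ) (t : ℕ) {X : Finset ℕ} {s : ℕ}
    (h : ∀ q ∈ X, rnk r U t q < s) : nCount r U t X s = 0 := by
  rw [nCount, Finset.filter_false_of_mem (fun q hq => not_le.mpr (h q hq)), Finset.card_empty]

lemma bpa_nCount_erase (r : ℕ → ℕ) (U : Finset ℕ) (t : ℕ) {X : Finset ℕ} {a : ℕ}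
    (ha : a ∈ X) (s : ℕ) :
    nCount r U t X s = nCount r U t (X.erase a) s + (if s ≤ rnk r U t a then 1 else 0) := by
  rw [nCount]
  conv_lhs => rw [← Finset.insert_erase ha]
  rw [Finset.filter_insert]
  split_ifs with h
  · rw [Finset.card_insert_of_notMem
      (fun hm => (Finset.mem_erase.mp (Finset.mem_filter.mp hm).1).1 rfl)]
    rfl
  · rw [Nat.add_zero]; rfl

lemma bpa_nCount_shift (r : ℕ → ℕ) (U : Finset ℕ) (t : ℕ) (hU : r (t+1) ∈ U)
    {X : Finset ℕ} (hX : X ⊆ U) (hpX : r (t+1) ∉ X) (s : ℕ) :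
    nCount r U (t+1) X s =
      nCount r U t X (if s ≤ rnk r U (t+1) (r (t+1)) then s + 1 else s) := by
  rw [nCount, nCount]
  congr 1
  apply Finset.filter_congr
  intro q hq
  have hqU : q ∈ U := hX hq
  have hne : q ≠ r (t+1) := fun h => hpX (h ▸ hq)
  rw [bpa_rnk_shift r U t hU hqU hne]
  have h2 : 2 ≤ rnk r U t q := bpa_two_le_rnk r U t hqU hne hU
  have h1 : 1 ≤ rnk r U (t+1) (r (t+1)) := bpa_one_le_rnk r U (t+1) hU
  constructor <;> intro h <;> split_ifs at * <;> omega

lemma bpa_le_pot (r : ℕ → ℕ) (U : Finset ℕ) (t : ℕ) (C D : Finset ℕ) {s : ℕ}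
    (hs : s ≤ U.card) :
    (nCount r U t C s : ℤ) - nCount r U t D s ≤ beladyPot r U t C D :=
by
  have hmem : s ∈ Finset.range (U.card + 1) := Finset.mem_range.mpr (by omega)
  exact Finset.le_sup' (fun s => (nCount r U t C s : ℤ) - nCount r U t D s) hmem

lemma bpa_pot_le (r : ℕ → ℕ) (U : Finset ℕ) (t : ℕ) (C D : Finset ℕ) {B : ℤ}
    (h : ∀ s ≤ U.card, (nCount r U t C s : ℤ) - nCount r U t D s ≤ B) :
    beladyPot r U t C D ≤ B :=
  Finset.sup'_le _ _ fun s hs => h s (by have := Finset.mem_range.mp hs; omega)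

lemma bpa_pot_nonneg (r : ℕ → ℕ) (U : Finset ℕ) (t : ℕ) {C D : Finset ℕ}
    (hcd : C.card = D.card) : 0 ≤ beladyPot r U t C D := by
  have h0 : (nCount r U t C 0 : ℤ) - nCount r U t D 0 ≤ beladyPot r U t C D :=
    bpa_le_pot r U t C D (Nat.zero_le _)
  have hC : nCount r U t C 0 = C.card := bpa_nCount_full r U t fun q _ => Nat.zero_le _
  have hD : nCount r U t D 0 = D.card := bpa_nCount_full r U t fun q _ => Nat.zero_le _
  rw [hC, hD, hcd] at h0
  simpa using h0


lemma bpa_victim_spec (r : ℕ → ℕ) (t : ℕ) {C : Finset ℕ} (h : C.Nonempty) :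
    victim r t C ∈ C ∧ ∀ q ∈ C, fifKey r t q ≤ fifKey r t (victim r t C) := by
  rw [victim, dif_pos h]
  exact Classical.choose_spec (C.exists_max_image (fifKey r t) h)

lemma bpa_fifCache_subset (r : ℕ → ℕ) (U : Finset ℕ) (C0 : Finset ℕ)
    (hC0 : C0 ⊆ U) (hr : ∀ s, r s ∈ U) : ∀ t, fifCache r C0 t ⊆ U := by
  intro t
  induction t with
  | zero => exact hC0
  | succ n ih =>
    show fifStep r n (fifCache r C0 n) ⊆ U
    rw [fifStep]
    split_ifs with h1 h2
    · exact ih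
    · exact ih
    · exact Finset.insert_subset (hr (n+1))
        (le_trans (Finset.erase_subset _ _) ih)

lemma bpa_fifCache_card (r : ℕ → ℕ) (C0 : Finset ℕ) :
    ∀ t, (fifCache r C0 t).card = C0.card := by
  intro t
  induction t with
  | zero => rfl
  | succ n ih =>
    show (fifStep r n (fifCache r C0 n)).card = C0.card
    rw [fifStep]
    split_ifs with h1 h2
    · exact ih
    · exact ih
    · have hne : (fifCache r C0 n).Nonempty := Finset.nonempty_iff_ne_empty.mpr h2
      have hv := (bpa_victim_spec r (n+1) hne).1
      have hpos : 0 < (fifCache r C0 n).card := Finset.card_pos.mpr hne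
      rw [Finset.card_insert_of_notMem
        (fun hm => h1 (Finset.mem_of_mem_erase hm)),
        Finset.card_erase_of_mem hv]
      omega


lemma bpa_nCount_le (r : ℕ → ℕ) (U : Finset ℕ) (t : ℕ) (X : Finset ℕ) (s : ℕ) :
    nCount r U t X s ≤ X.card :=
  Finset.card_filter_le _ _

/-- **Per-step potential inequality for Belady's algorithm** (`Bel' + Φ' ≤ Off'`):
the offline eviction raises `Φ` by at most `1`, a FiF fault decreases `Φ` by exactly `1`,
and the reinsertion of the requested page into the next-request ordering leaves `Φ`
unchanged; consequently, at every time step, the FiF fault indicator plus the change of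
the potential is at most the offline loading cost. -/
theorem belady_potential_step
    (r : ℕ → ℕ) (U : Finset ℕ) (k : ℕ) (C0 : Finset ℕ)
    (hC0 : C0 ⊆ U) (hk : C0.card = k)
    (hr : ∀ s, r s ∈ U)
    (D : ℕ → Finset ℕ) (hD0 : D 0 = C0) (hDU : ∀ t, D t ⊆ U)
    (hDcard : ∀ t, (D t).card = k) (hDserve : ∀ t, r (t+1) ∈ D (t+1)) (t : ℕ) :
    ((if r (t+1) ∈ fifCache r C0 t then 0 else 1) : ℤ)
      + beladyPot r U (t+1) (fifCache r C0 (t+1)) (D (t+1))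
      - beladyPot r U t (fifCache r C0 t) (D t)
    ≤ ((D (t+1)) \ (D t)).card := by
  have hpU : r (t+1) ∈ U := hr (t+1)
  have hCU : fifCache r C0 t ⊆ U := bpa_fifCache_subset r U C0 hC0 hr t
  have hCcard : (fifCache r C0 t).card = k := by rw [bpa_fifCache_card, hk]
  have hD'U : D (t+1) ⊆ U := hDU (t+1)
  have hD'card : (D (t+1)).card = k := hDcard t.succ
  have hpD : r (t+1) ∈ D (t+1) := hDserve t
  have hkpos : 0 < k := by
    have := Finset.card_pos.mpr ⟨r (t+1), hpD⟩
    omega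
  have hrnkp : rnk r U t (r (t+1)) = 1 := bpa_rnk_req r U t hpU
  have hρ1 : 1 ≤ rnk r U (t+1) (r (t+1)) := bpa_one_le_rnk r U (t+1) hpU
  have hρU : rnk r U (t+1) (r (t+1)) ≤ U.card := bpa_rnk_le_card r U (t+1) _
  -- Step 1 : offline evictions raise the potential by at most the number of loads
  have hstep1 : beladyPot r U t (fifCache r C0 t) (D (t+1)) ≤
      beladyPot r U t (fifCache r C0 t) (D t) + ((D (t+1)) \ (D t)).card := by
    apply bpa_pot_le
    intro s hs
    have h1 := bpa_nCount_sub r U t (D t) (D (t+1)) s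
    have h2 := bpa_le_pot r U t (fifCache r C0 t) (D t) hs
    have hsd : ((D t) \ (D (t+1))).card = ((D (t+1)) \ (D t)).card :=
      Finset.card_sdiff_comm (by rw [hDcard t, hD'card])
    rw [hsd] at h1
    have h1' : (nCount r U t (D t) s : ℤ) ≤
        (nCount r U t (D (t+1)) s : ℤ) + ((D (t+1)) \ (D t)).card := by exact_mod_cast h1
    linarith
  have hDmsub : (D (t+1)).erase (r (t+1)) ⊆ U := le_trans (Finset.erase_subset _ _) hD'U
  have hDmnot : r (t+1) ∉ (D (t+1)).erase (r (t+1)) := Finset.notMem_erase _ _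
  by_cases hhit : r (t+1) ∈ fifCache r C0 t
  · -- CASE A : hit, the potential does not increase under the rank shift
    have hC'eq : fifCache r C0 (t+1) = fifCache r C0 t := by
      show fifStep r t (fifCache r C0 t) = _
      rw [fifStep, if_pos hhit]
    rw [hC'eq, if_pos hhit]
    have hstep2 : beladyPot r U (t+1) (fifCache r C0 t) (D (t+1)) ≤
        beladyPot r U t (fifCache r C0 t) (D (t+1)) := by
      apply bpa_pot_le
      intro s hs
      have hsfdef : ∃ w : ℕ, w = if s ≤ rnk r U (t+1) (r (t+1)) then s + 1 else s := ⟨_, rfl⟩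
      obtain ⟨w, hw⟩ := hsfdef
      have e1 := bpa_nCount_erase r U (t+1) hhit s
      have e2 := bpa_nCount_erase r U (t+1) hpD s
      have e3 := bpa_nCount_shift r U t hpU
        (le_trans (Finset.erase_subset _ _) hCU) (Finset.notMem_erase _ _) s
      have e4 := bpa_nCount_shift r U t hpU hDmsub hDmnot s
      rw [← hw] at e3 e4
      by_cases hcase : w ≤ U.card
      · have e5 := bpa_nCount_erase r U t hhit w
        have e6 := bpa_nCount_erase r U t hpD w
        rw [hrnkp] at e5 e6
        have e7 := bpa_le_pot r U t (fifCache r C0 t) (D (t+1)) hcase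
        rw [e1, e2, e3, e4]
        split_ifs at e5 e6 e7 ⊢ <;> omega
      · have e5 : nCount r U t ((fifCache r C0 t).erase (r (t+1))) w = 0 :=
          bpa_nCount_zero_of r U t fun q hq =>
            lt_of_le_of_lt (bpa_rnk_le_card r U t q) (not_le.mp hcase)
        have e6 : nCount r U t ((D (t+1)).erase (r (t+1))) w = 0 :=
          bpa_nCount_zero_of r U t fun q hq =>
            lt_of_le_of_lt (bpa_rnk_le_card r U t q) (not_le.mp hcase)
        have e7 : (0:ℤ) ≤ beladyPot r U t (fifCache r C0 t) (D (t+1)) :=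
          bpa_pot_nonneg r U t (by rw [hCcard, hD'card])
        rw [e1, e2, e3, e4, e5, e6]
        split_ifs <;> omega
    linarith
  · -- CASE B : fault, FiF evicts the farthest-in-future page and the potential drops
    have hCne : (fifCache r C0 t).Nonempty := Finset.card_pos.mp (by omega)
    have hC'eq : fifCache r C0 (t+1) =
        insert (r (t+1)) ((fifCache r C0 t).erase (victim r (t+1) (fifCache r C0 t))) := by
      show fifStep r t (fifCache r C0 t) = _
      rw [fifStep, if_neg hhit, if_neg (Finset.nonempty_iff_ne_empty.mp hCne)]
    have hv : victim r (t+1) (fifCache r C0 t) ∈ fifCache r C0 t :=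
      (bpa_victim_spec r (t+1) hCne).1
    have hvmax := (bpa_victim_spec r (t+1) hCne).2
    have hvne : victim r (t+1) (fifCache r C0 t) ≠ r (t+1) := fun h => hhit (h ▸ hv)
    have hCne' : ∀ q ∈ fifCache r C0 t, q ≠ r (t+1) := fun q hq h => hhit (h ▸ hq)
    have hρv2 : 2 ≤ rnk r U t (victim r (t+1) (fifCache r C0 t)) :=
      bpa_two_le_rnk r U t (hCU hv) hvne hpU
    have hρvU : rnk r U t (victim r (t+1) (fifCache r C0 t)) ≤ U.card :=
      bpa_rnk_le_card r U t _
    have hrle : ∀ q ∈ fifCache r C0 t,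
        rnk r U t q ≤ rnk r U t (victim r (t+1) (fifCache r C0 t)) := by
      intro q hq
      apply bpa_rnk_mono
      rw [← bpa_key_shift r t q (hCne' q hq), ← bpa_key_shift r t _ hvne]
      exact hvmax q hq
    have hU2 : 2 ≤ U.card := by
      have h := Finset.card_le_card (Finset.insert_subset hpU hCU)
      rw [Finset.card_insert_of_notMem hhit, hCcard] at h
      omega
    -- the potential before the FiF eviction is at least 1
    have hPot1 : 1 ≤ beladyPot r U t (fifCache r C0 t) (D (t+1)) := by
      have ha : nCount r U t (fifCache r C0 t) 2 = k := by
        rw [bpa_nCount_full r U t fun q hq => bpa_two_le_rnk r U t (hCU hq) (hCne' q hq) hpU,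
          hCcard]
      have hb := bpa_nCount_erase r U t hpD 2
      rw [hrnkp, if_neg (by omega)] at hb
      have hc := bpa_nCount_le r U t ((D (t+1)).erase (r (t+1))) 2
      have hd : ((D (t+1)).erase (r (t+1))).card = k - 1 := by
        rw [Finset.card_erase_of_mem hpD, hD'card]
      have he := bpa_le_pot r U t (fifCache r C0 t) (D (t+1)) hU2
      rw [ha, hb] at he
      rw [hd] at hc
      have hc' : (nCount r U t ((D (t+1)).erase (r (t+1))) 2 : ℤ) ≤ (k : ℤ) - 1 := by
        omega
      have : (k:ℤ) - ((k:ℤ) - 1) ≤ beladyPot r U t (fifCache r C0 t) (D (t+1)) := by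
        refine le_trans ?_ he
        push_cast
        linarith
      linarith
    have hstep2 : beladyPot r U (t+1) (fifCache r C0 (t+1)) (D (t+1)) ≤
        beladyPot r U t (fifCache r C0 t) (D (t+1)) - 1 := by
      apply bpa_pot_le
      intro s hs
      obtain ⟨w, hw⟩ : ∃ w : ℕ, w = if s ≤ rnk r U (t+1) (r (t+1)) then s + 1 else s := ⟨_, rfl⟩
      have hpC' : r (t+1) ∈ fifCache r C0 (t+1) := by
        rw [hC'eq]; exact Finset.mem_insert_self _ _
      have e1 := bpa_nCount_erase r U (t+1) hpC' s
      have hereq : (fifCache r C0 (t+1)).erase (r (t+1)) =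
          (fifCache r C0 t).erase (victim r (t+1) (fifCache r C0 t)) := by
        rw [hC'eq]
        exact Finset.erase_insert fun hmem => hhit (Finset.mem_of_mem_erase hmem)
      rw [hereq] at e1
      have e2 := bpa_nCount_erase r U (t+1) hpD s
      have hCmsub : (fifCache r C0 t).erase (victim r (t+1) (fifCache r C0 t)) ⊆ U :=
        le_trans (Finset.erase_subset _ _) hCU
      have hCmnot : r (t+1) ∉ (fifCache r C0 t).erase (victim r (t+1) (fifCache r C0 t)) :=
        fun hmem => hhit (Finset.mem_of_mem_erase hmem)
      have e3 := bpa_nCount_shift r U t hpU hCmsub hCmnot s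
      have e4 := bpa_nCount_shift r U t hpU hDmsub hDmnot s
      rw [← hw] at e3 e4
      rw [e1, e2, e3, e4]
      by_cases h2 : w ≤ rnk r U t (victim r (t+1) (fifCache r C0 t))
      · by_cases h1 : w ≤ 1
        · -- both truncated caches are counted fully
          have eC := bpa_nCount_le_one r U t h1 hCmsub
          have eD := bpa_nCount_le_one r U t h1 hDmsub
          rw [Finset.card_erase_of_mem hv, hCcard] at eC
          rw [Finset.card_erase_of_mem hpD, hD'card] at eD
          rw [eC, eD]
          split_ifs <;> omega
        · -- the main range : compare with the potential at rank w
          have e5 := bpa_nCount_erase r U t hv w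
          have e6 := bpa_nCount_erase r U t hpD w
          rw [hrnkp, if_neg (by omega)] at e6
          rw [if_pos h2] at e5
          have e7 := bpa_le_pot r U t (fifCache r C0 t) (D (t+1)) (le_trans h2 hρvU)
          rw [e5, e6] at e7
          split_ifs <;> push_cast at e7 ⊢ <;> linarith
      · -- beyond the maximal rank of the FiF cache
        have eC0 : nCount r U t
            ((fifCache r C0 t).erase (victim r (t+1) (fifCache r C0 t))) w = 0 :=
          bpa_nCount_zero_of r U t fun q hq =>
            lt_of_le_of_lt (hrle q (Finset.mem_of_mem_erase hq)) (not_le.mp h2)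
        rw [eC0]
        split_ifs <;> simp <;> linarith
    rw [if_neg hhit]
    linarith
end

section
/- The competitive ratio of the soft allocation problem in $\ell$ dimensions is $\Omega(\ell)$: there is an adversary strategy (always requesting direction $\arg\min_i x_i$ with threshold cost $f(z) = \ell^{-2} \cdot \mathbf{1}\{z < 1/(\ell-1)\}$) against which every online algorithm incurs cost at least $\ell^{-2}$ per step, while some offline algorithm (staying at $y$ with $y_{i^*} = 0$ for the least-requested direction $i^*$ and $y_i = 1/(\ell-1)$ otherwise) incurs cost at most $\ell^{-2}$ on at most a $1/\ell$ fraction of steps, up to an additive constant. -/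
open Finset

/-- **Ω(ℓ) lower bound for soft allocation.**
Consider the adversary that, at each step `t ∈ {1, …, T}`, requests a direction `r t`
minimizing the current coordinate of the online point `x (t-1) ∈ Δ^{ℓ-1}` and issues the
threshold cost `f(z) = ℓ⁻² ⋅ 𝟙{z < 1/(ℓ-1)}`. Then every online algorithm pays total cost
(movement plus service) at least `T/ℓ²`, while some fixed offline point `y ∈ Δ^{ℓ-1}`
(with `y_{i*} = 0` for the least-requested direction and `yᵢ = 1/(ℓ-1)` otherwise) incurs
total service cost at most `T/ℓ³`; hence the competitive ratio is `Ω(ℓ)`. -/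
theorem soft_allocation_lower_bound (ℓ : ℕ) (hl : 2 ≤ ℓ) (T : ℕ)
    (x : ℕ → Fin ℓ → ℝ)
    (hx0 : ∀ t i, 0 ≤ x t i) (hx1 : ∀ t, ∑ i, x t i = 1)
    (r : ℕ → Fin ℓ)
    (hr : ∀ t, 1 ≤ t → ∀ i, x (t-1) (r t) ≤ x (t-1) i) :
    (∑ t ∈ Finset.Icc 1 T,
        ((∑ i, |x t i - x (t-1) i|) +
          (if x t (r t) < 1 / ((ℓ : ℝ) - 1) then ((ℓ : ℝ)^2)⁻¹ else 0)))
      ≥ T / (ℓ : ℝ)^2 ∧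
    ∃ y : Fin ℓ → ℝ, (∀ i, 0 ≤ y i) ∧ (∑ i, y i = 1) ∧
      (∑ t ∈ Finset.Icc 1 T,
          (if y (r t) < 1 / ((ℓ : ℝ) - 1) then ((ℓ : ℝ)^2)⁻¹ else 0))
        ≤ T / (ℓ : ℝ)^3 := by
  have hL2 : (2:ℝ) ≤ (ℓ:ℝ) := by exact_mod_cast hl
  have hLpos : (0:ℝ) < (ℓ:ℝ) := by linarith
  have hL1 : (0:ℝ) < (ℓ:ℝ) - 1 := by linarith
  have hcard : (Finset.Icc 1 T).card = T := by simp
  constructor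
  · -- online cost lower bound
    have hstep : ∀ t ∈ Finset.Icc 1 T,
        ((ℓ:ℝ)^2)⁻¹ ≤ (∑ i, |x t i - x (t-1) i|) +
          (if x t (r t) < 1 / ((ℓ:ℝ) - 1) then ((ℓ:ℝ)^2)⁻¹ else 0) := by
      intro t ht
      have ht1 : 1 ≤ t := (Finset.mem_Icc.mp ht).1
      by_cases h : x t (r t) < 1 / ((ℓ:ℝ) - 1)
      · have hnn : 0 ≤ ∑ i, |x t i - x (t-1) i| :=
          Finset.sum_nonneg fun i _ => abs_nonneg _
        simp only [h, if_true]
        linarith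
      · simp only [h, if_false, add_zero]
        push_neg at h
        have hmin : (ℓ:ℝ) * x (t-1) (r t) ≤ 1 := by
          have hs := Finset.sum_le_sum (fun i (_ : i ∈ Finset.univ) => hr t ht1 i)
          rw [Finset.sum_const, Finset.card_univ, Fintype.card_fin, hx1 (t-1)] at hs
          simpa [nsmul_eq_mul] using hs
        have h1 : x (t-1) (r t) ≤ 1/(ℓ:ℝ) := by
          rw [le_div_iff₀ hLpos]; linarith
        have h2 : |x t (r t) - x (t-1) (r t)| ≤ ∑ i, |x t i - x (t-1) i| :=
          Finset.single_le_sum (f := fun i => |x t i - x (t-1) i|)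
            (fun i _ => abs_nonneg _) (Finset.mem_univ (r t))
        have h3 : x t (r t) - x (t-1) (r t) ≤ |x t (r t) - x (t-1) (r t)| := le_abs_self _
        have key : ((ℓ:ℝ)^2)⁻¹ ≤ 1/((ℓ:ℝ)-1) - 1/(ℓ:ℝ) := by
          have heq : 1/((ℓ:ℝ)-1) - 1/(ℓ:ℝ) = (((ℓ:ℝ)-1) * (ℓ:ℝ))⁻¹ := by
            field_simp
            ring
          rw [heq]
          apply inv_anti₀ (by positivity)
          nlinarith
        linarith
    have hb := Finset.card_nsmul_le_sum (Finset.Icc 1 T) _ _ hstep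
    rw [hcard, nsmul_eq_mul] at hb
    calc (T:ℝ) / (ℓ:ℝ)^2 = (T:ℝ) * ((ℓ:ℝ)^2)⁻¹ := by ring
      _ ≤ _ := hb
  · -- offline point
    obtain ⟨i₀, -, hmin⟩ := Finset.exists_min_image Finset.univ
      (fun i => ((Finset.Icc 1 T).filter (fun t => r t = i)).card)
      ⟨⟨0, by omega⟩, Finset.mem_univ _⟩
    set c : ℕ := ((Finset.Icc 1 T).filter (fun t => r t = i₀)).card with hc
    have hsum : ∑ i, ((Finset.Icc 1 T).filter (fun t => r t = i)).card = T := by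
      rw [← Finset.card_eq_sum_card_fiberwise
        (fun t (_ : t ∈ Finset.Icc 1 T) => Finset.mem_univ (r t))]
      exact hcard
    have hcnt : ℓ * c ≤ T := by
      calc ℓ * c = ∑ _i : Fin ℓ, c := by
            rw [Finset.sum_const, Finset.card_univ, Fintype.card_fin, smul_eq_mul]
        _ ≤ ∑ i, ((Finset.Icc 1 T).filter (fun t => r t = i)).card :=
            Finset.sum_le_sum fun i _ => hmin i (Finset.mem_univ i)
        _ = T := hsum
    have hcntR : (ℓ:ℝ) * (c:ℝ) ≤ (T:ℝ) := by exact_mod_cast hcnt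
    refine ⟨fun i => if i = i₀ then 0 else 1/((ℓ:ℝ)-1), fun i => ?_, ?_, ?_⟩
    · by_cases h : i = i₀ <;> simp [h] <;> omega
    · have hrw : ∀ i : Fin ℓ, (if i = i₀ then (0:ℝ) else 1/((ℓ:ℝ)-1))
          = 1/((ℓ:ℝ)-1) - (if i = i₀ then 1/((ℓ:ℝ)-1) else 0) := by
        intro i; split <;> ring
      rw [Finset.sum_congr rfl (fun i _ => hrw i), Finset.sum_sub_distrib,
        Finset.sum_ite_eq' Finset.univ i₀ (fun _ => 1/((ℓ:ℝ)-1)),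
        Finset.sum_const, Finset.card_univ, Fintype.card_fin]
      simp only [Finset.mem_univ, if_true, nsmul_eq_mul]
      field_simp
    · have hterm : ∀ t, (if (if r t = i₀ then (0:ℝ) else 1/((ℓ:ℝ)-1)) < 1/((ℓ:ℝ)-1)
          then ((ℓ:ℝ)^2)⁻¹ else 0) = if r t = i₀ then ((ℓ:ℝ)^2)⁻¹ else 0 := by
        intro t
        by_cases h : r t = i₀
        · simp only [h, if_true]
          rw [if_pos]
          positivity
        · simp only [h, if_false]
          rw [if_neg (lt_irrefl _)]
      rw [Finset.sum_congr rfl (fun t _ => hterm t), ← Finset.sum_filter,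
        Finset.sum_const, ← hc, nsmul_eq_mul]
      have hcle : (c:ℝ) ≤ (T:ℝ) / (ℓ:ℝ) := by
        rw [le_div_iff₀ hLpos]; linarith
      calc (c:ℝ) * ((ℓ:ℝ)^2)⁻¹ ≤ ((T:ℝ) / (ℓ:ℝ)) * ((ℓ:ℝ)^2)⁻¹ :=
            mul_le_mul_of_nonneg_right hcle (by positivity)
        _ = (T:ℝ) / (ℓ:ℝ)^3 := by
            rw [div_mul_eq_mul_div, div_eq_div_iff (by positivity) (by positivity)]
            field_simp
end
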